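/- arXiv:1510.06826 — 4 statements merged into one kernel-verified Lean document; each statement's English description precedes it below -/
import Mathlib

section
/- Let λ, P_a, σ² > 0 with c := σ²/(λπ P_a) ≠ 1. Let r be a real random variable with probability density f_r(r) = 2πλ r e^{−λπr²} for r > 0 and let g be exponentially distributed with rate 1, independent of r, and define SNR_d = (P_a/σ²) · g · r^{−2}. Then the average downlink rate satisfies E[log₂(1 + SNR_d)] = ln(c) / ((c − 1) · ln 2). -/
open MeasureTheory ProbabilityTheory Real

open Set
open scoped ENNReal

section helpers
variable {lam b : ℝ}

lemma Lderiv (hlam : 0 < lam) (hb : 0 < b) :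
    ∀ x ∈ Ici (0:ℝ), HasDerivAt (fun x => -(π * lam / b) * Real.exp (-(b * x ^ 2)))
      (2 * π * lam * x * Real.exp (-(b * x ^ 2))) x := by
  intro x _
  have h1 : HasDerivAt (fun x : ℝ => -(b * x ^ 2)) (-(b * (2 * x))) x := by
    simpa [Pi.neg_def] using (((hasDerivAt_pow 2 x)).const_mul b).neg
  have := (h1.exp).const_mul (-(π * lam / b))
  convert this using 1
  · rfl
  · rfl
  field_simp

lemma Ltend (hlam : 0 < lam) (hb : 0 < b) :
    Filter.Tendsto (fun x => -(π * lam / b) * Real.exp (-(b * x ^ 2)))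
      Filter.atTop (nhds 0) := by
  have h1 : Filter.Tendsto (fun x : ℝ => -(b * x ^ 2)) Filter.atTop Filter.atBot := by
    have := (Filter.tendsto_pow_atTop (n := 2) (by norm_num)).const_mul_atTop hb
    exact Filter.tendsto_neg_atBot_iff.mpr this
  have := (Real.tendsto_exp_atBot.comp h1).const_mul (-(π * lam / b))
  simpa using this

lemma L1 (hlam : 0 < lam) (hb : 0 < b) :
    ∫ x in Ioi (0:ℝ), 2 * π * lam * x * Real.exp (-(b * x ^ 2)) = π * lam / b := by
  have := integral_Ioi_of_hasDerivAt_of_nonneg' (Lderiv hlam hb)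
    (fun x hx => by have hx0 : (0:ℝ) < x := hx; positivity) (Ltend hlam hb)
  simpa using this

lemma L1' (hlam : 0 < lam) (hb : 0 < b) :
    IntegrableOn (fun x => 2 * π * lam * x * Real.exp (-(b * x ^ 2))) (Ioi (0:ℝ)) :=
  integrableOn_Ioi_deriv_of_nonneg' (Lderiv hlam hb)
    (fun x hx => by have hx0 : (0:ℝ) < x := hx; positivity) (Ltend hlam hb)

lemma L2 (hlam : 0 < lam) (hb : 0 < b) :
    ∫⁻ x in Ioi (0:ℝ), ENNReal.ofReal (2 * π * lam * x * Real.exp (-(b * x ^ 2)))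
      = ENNReal.ofReal (π * lam / b) := by
  rw [← ofReal_integral_eq_lintegral_ofReal (L1' hlam hb)
    (by filter_upwards [ae_restrict_mem measurableSet_Ioi] with x hx
        have hx0 : (0:ℝ) < x := hx; positivity), L1 hlam hb]

lemma L3 {a : ℝ} (ha : 0 ≤ a) : expMeasure 1 (Ioi a) = ENNReal.ofReal (Real.exp (-a)) := by
  have h0 : expMeasure 1 = volume.withDensity (exponentialPDF 1) := rfl
  rw [h0, withDensity_apply _ measurableSet_Ioi]
  have : ∀ᵐ x ∂(volume.restrict (Ioi a)), exponentialPDF 1 x = ENNReal.ofReal (Real.exp (-x)) := by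
    filter_upwards [ae_restrict_mem measurableSet_Ioi] with x hx
    rw [exponentialPDF_of_nonneg (le_trans ha (le_of_lt hx))]
    norm_num
  rw [lintegral_congr_ae this,
    ← ofReal_integral_eq_lintegral_ofReal (exp_neg_integrableOn_Ioi a one_pos |>.congr ?_)
      (by filter_upwards with x; positivity)]
  · rw [integral_exp_neg_Ioi]
  · filter_upwards with x; norm_num

-- L5: the final t-integral
lemma L5deriv {c : ℝ} (hc : 0 < c) (hc1 : c ≠ 1) :
    ∀ t ∈ Ici (0:ℝ), HasDerivAt (fun t => (c - 1)⁻¹ * Real.log (c + (1 - c) * Real.exp (-t)))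
      ((1 + c * (Real.exp t - 1))⁻¹) t := by
  intro t ht
  have het : 0 < Real.exp (-t) := Real.exp_pos _
  have het1 : Real.exp (-t) ≤ 1 := Real.exp_le_one_iff.mpr (by simpa using ht)
  have hpos : 0 < c + (1 - c) * Real.exp (-t) := by nlinarith
  have h1 : HasDerivAt (fun t : ℝ => c + (1 - c) * Real.exp (-t))
      ((1 - c) * (Real.exp (-t) * (-1))) t := by
    exact (((hasDerivAt_neg t).exp).const_mul (1 - c)).const_add c
  have h2 := (h1.log (ne_of_gt hpos)).const_mul ((c - 1)⁻¹)
  convert h2 using 1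
  · rfl
  · rfl
  have h3 : Real.exp (-t) = (Real.exp t)⁻¹ := Real.exp_neg t
  have h4 : (0:ℝ) < Real.exp t := Real.exp_pos t
  have h5 : c - 1 ≠ 0 := sub_ne_zero.mpr hc1
  have h6 : 0 < 1 + c * (Real.exp t - 1) := by nlinarith [Real.one_le_exp (show (0:ℝ) ≤ t from ht)]
  rw [h3] at hpos ⊢
  have h7 : (1:ℝ) - c + c * Real.exp t ≠ 0 := by nlinarith
  field_simp
  rw [← neg_div, eq_div_iff (show c * Real.exp t + (1 - c) ≠ 0 from
      (show (0:ℝ) < c * Real.exp t + (1 - c) from by nlinarith).ne')]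
  ring

lemma L5tend {c : ℝ} (hc : 0 < c) :
    Filter.Tendsto (fun t => (c - 1)⁻¹ * Real.log (c + (1 - c) * Real.exp (-t)))
      Filter.atTop (nhds ((c - 1)⁻¹ * Real.log c)) := by
  have h1 : Filter.Tendsto (fun t : ℝ => c + (1 - c) * Real.exp (-t)) Filter.atTop (nhds c) := by
    have := (Real.tendsto_exp_neg_atTop_nhds_zero).const_mul (1 - c)
    simpa using (this.const_add c)
  exact (((Real.continuousAt_log (ne_of_gt hc)).tendsto.comp h1).const_mul _)

lemma L5 {c : ℝ} (hc : 0 < c) (hc1 : c ≠ 1) :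
    ∫ t in Ioi (0:ℝ), (1 + c * (Real.exp t - 1))⁻¹ = Real.log c / (c - 1) := by
  have hnn : ∀ t ∈ Ioi (0:ℝ), 0 ≤ (1 + c * (Real.exp t - 1))⁻¹ := by
    intro t ht
    have : (0:ℝ) < 1 + c * (Real.exp t - 1) := by
      nlinarith [Real.one_le_exp (le_of_lt (show (0:ℝ) < t from ht))]
    positivity
  have := integral_Ioi_of_hasDerivAt_of_nonneg' (L5deriv hc hc1) hnn (L5tend hc)
  simpa [div_eq_inv_mul] using this

lemma L5' {c : ℝ} (hc : 0 < c) (hc1 : c ≠ 1) :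
    IntegrableOn (fun t => (1 + c * (Real.exp t - 1))⁻¹) (Ioi (0:ℝ)) := by
  have hnn : ∀ t ∈ Ioi (0:ℝ), 0 ≤ (1 + c * (Real.exp t - 1))⁻¹ := by
    intro t ht
    have : (0:ℝ) < 1 + c * (Real.exp t - 1) := by
      nlinarith [Real.one_le_exp (le_of_lt (show (0:ℝ) < t from ht))]
    positivity
  exact integrableOn_Ioi_deriv_of_nonneg' (L5deriv hc hc1) hnn (L5tend hc)

end helpers

/-- Eq. (49), case `α = 2`: the average downlink rate for a dual-antenna AP with internode
interference neglected is `E[log₂(1 + SNR_d)] = ln(c)/((c − 1) ln 2)` with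
`c = σ²/(λπP_a) ≠ 1`. -/
theorem stmt_5 {Ω : Type*} [MeasurableSpace Ω] (μ : Measure Ω) [IsProbabilityMeasure μ]
    (lam Pa σ2 : ℝ) (hlam : 0 < lam) (hPa : 0 < Pa) (hσ2 : 0 < σ2)
    (hc : σ2 / (lam * π * Pa) ≠ 1)
    (r g : Ω → ℝ)
    (hindep : IndepFun r g μ)
    (hr : μ.map r = volume.withDensity (fun x =>
      ENNReal.ofReal (if 0 < x then 2 * π * lam * x * Real.exp (-(lam * π * x ^ 2)) else 0)))
    (hg : μ.map g = expMeasure 1) :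
    ∫ ω, Real.logb 2 (1 + (Pa / σ2) * g ω * (r ω ^ 2)⁻¹) ∂μ
      = Real.log (σ2 / (lam * π * Pa)) / ((σ2 / (lam * π * Pa) - 1) * Real.log 2) := by
  have hπ : 0 < π := Real.pi_pos
  set c : ℝ := σ2 / (lam * π * Pa) with hc_def
  have hcpos : 0 < c := by positivity
  set dens : ℝ → ℝ≥0∞ := fun x =>
    ENNReal.ofReal (if 0 < x then 2 * π * lam * x * Real.exp (-(lam * π * x ^ 2)) else 0)
    with hdens_def
  have hdens_meas : Measurable dens := by
    apply ENNReal.measurable_ofReal.comp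
    exact Measurable.ite (measurableSet_lt measurable_const measurable_id)
      ((measurable_id.const_mul (2 * π * lam)).mul
        (Real.measurable_exp.comp (((measurable_id.pow_const 2).const_mul (lam * π)).neg)))
      measurable_const
  -- the withDensity measure is nonzero (mass of Ioi 0 is 1)
  have hIoi : ∫⁻ x in Ioi (0:ℝ), dens x = ENNReal.ofReal (π * lam / (lam * π)) := by
    rw [← L2 hlam (by positivity : (0:ℝ) < lam * π)]
    refine setLIntegral_congr_fun measurableSet_Ioi (fun x hx => ?_)
    simp [hdens_def, if_pos (show (0:ℝ) < x from hx)]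
  have hr_ae : AEMeasurable r μ := by
    by_contra h
    rw [Measure.map_of_not_aemeasurable h] at hr
    have h1 := congrArg (fun m : Measure ℝ => m (Ioi 0)) hr
    simp only [Measure.coe_zero, Pi.zero_apply] at h1
    rw [withDensity_apply _ measurableSet_Ioi, hIoi] at h1
    rw [show π * lam / (lam * π) = 1 by rw [mul_comm, div_self (by positivity)]] at h1
    simp at h1
  have hg_ae : AEMeasurable g μ := by
    by_contra h
    rw [Measure.map_of_not_aemeasurable h] at hg
    have : (expMeasure 1) univ = 1 :=
      (isProbabilityMeasure_expMeasure one_pos).measure_univ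
    rw [← hg] at this
    simp at this
  -- a.e. positivity
  have hrpos : ∀ᵐ ω ∂μ, 0 < r ω := by
    rw [ae_iff]
    have hset : {ω | ¬ 0 < r ω} = r ⁻¹' (Iic 0) := by ext ω; simp
    rw [hset, ← Measure.map_apply_of_aemeasurable hr_ae measurableSet_Iic, hr,
      withDensity_apply _ measurableSet_Iic]
    rw [setLIntegral_congr_fun measurableSet_Iic (fun x hx => ?_), lintegral_zero]
    simp only [hdens_def]
    rw [if_neg (by simp at hx; exact not_lt.mpr hx)]
    simp
  have hgpos : ∀ᵐ ω ∂μ, 0 ≤ g ω := by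
    rw [ae_iff]
    have hset : {ω | ¬ 0 ≤ g ω} = g ⁻¹' (Iio 0) := by ext ω; simp
    rw [hset, ← Measure.map_apply_of_aemeasurable hg_ae measurableSet_Iio, hg]
    have h0 : expMeasure 1 = volume.withDensity (exponentialPDF 1) := rfl
    rw [h0, withDensity_apply _ measurableSet_Iio]
    exact lintegral_exponentialPDF_of_nonpos le_rfl
  have hk : 0 < Pa / σ2 := div_pos hPa hσ2
  set X : Ω → ℝ := fun ω => Pa / σ2 * g ω * (r ω ^ 2)⁻¹ with hX_def
  have hX_ae : AEMeasurable X μ :=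
    (hg_ae.const_mul _).mul ((hr_ae.pow_const 2).inv)
  have hXnn : ∀ᵐ ω ∂μ, 0 ≤ X ω := by
    filter_upwards [hgpos] with ω h2
    exact mul_nonneg (mul_nonneg hk.le h2) (inv_nonneg.2 (by positivity))
  have f_nn : 0 ≤ᵐ[μ] fun ω => Real.log (1 + X ω) := by
    filter_upwards [hXnn] with ω h
    exact Real.log_nonneg (by linarith)
  have f_meas : AEMeasurable (fun ω => Real.log (1 + X ω)) μ :=
    Real.measurable_log.comp_aemeasurable (aemeasurable_const.add hX_ae)
  have key : ∫ ω, Real.log (1 + X ω) ∂μ = Real.log c / (c - 1) := by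
    rw [integral_eq_lintegral_of_nonneg_ae f_nn f_meas.aestronglyMeasurable,
      lintegral_eq_lintegral_meas_lt μ f_nn f_meas]
    have hmeas_t : ∀ t ∈ Ioi (0:ℝ),
        μ {a | t < Real.log (1 + X a)} = ENNReal.ofReal ((1 + c * (Real.exp t - 1))⁻¹) := by
      intro t ht
      have ht' : (0:ℝ) < t := ht
      set z : ℝ := Real.exp t - 1 with hz_def
      have hzpos : 0 < z := by
        have h1 : (1:ℝ) < Real.exp t := by
          calc (1:ℝ) = Real.exp 0 := (Real.exp_zero).symm
          _ < Real.exp t := Real.exp_lt_exp.2 ht'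
        simp only [hz_def]; linarith
      have step1 : μ {a | t < Real.log (1 + X a)} = μ {a | z < X a} := by
        apply measure_congr
        filter_upwards [hXnn] with ω hω
        show (t < Real.log (1 + X ω)) = (z < X ω)
        simp only [eq_iff_iff]
        rw [Real.lt_log_iff_exp_lt (by linarith : (0:ℝ) < 1 + X ω)]
        constructor <;> intro h <;> simp only [hz_def] at * <;> linarith
      rw [step1]
      haveI : IsProbabilityMeasure (expMeasure 1) := isProbabilityMeasure_expMeasure one_pos
      set S : Set (ℝ × ℝ) := {p | z < Pa / σ2 * p.2 * (p.1 ^ 2)⁻¹} with hS_def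
      have hS : MeasurableSet S :=
        measurableSet_lt measurable_const
          ((measurable_snd.const_mul _).mul ((measurable_fst.pow_const 2).inv))
      have hpre : {a | z < X a} = (fun ω => (r ω, g ω)) ⁻¹' S := rfl
      set b : ℝ := lam * π + z * σ2 / Pa with hb_def
      have hb : 0 < b := by positivity
      have slice : ∀ x : ℝ, 0 < x →
          expMeasure 1 (Prod.mk x ⁻¹' S) = ENNReal.ofReal (Real.exp (-(z * σ2 / Pa * x ^ 2))) := by
        intro x hx
        have hx2 : (0:ℝ) < x ^ 2 := by positivity
        have hset : Prod.mk x ⁻¹' S = Ioi (z * σ2 / Pa * x ^ 2) := by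
          ext y
          simp only [hS_def, mem_preimage, mem_setOf_eq, mem_Ioi]
          rw [← div_eq_mul_inv, lt_div_iff₀ hx2,
            show z * σ2 / Pa * x ^ 2 = z * x ^ 2 / (Pa / σ2) by field_simp,
            div_lt_iff₀ hk, mul_comm y (Pa / σ2)]
        rw [hset, L3 (by positivity)]
      rw [hpre, ← Measure.map_apply_of_aemeasurable (hr_ae.prodMk hg_ae) hS,
        (indepFun_iff_map_prod_eq_prod_map_map hr_ae hg_ae).mp hindep,
        Measure.prod_apply hS, hr, hg,
        lintegral_withDensity_eq_lintegral_mul _ hdens_meas (measurable_measure_prodMk_left hS)]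
      have hmain : ∫⁻ x, ((dens * fun x => expMeasure 1 (Prod.mk x ⁻¹' S)) x)
          = ∫⁻ x in Ioi (0:ℝ), ENNReal.ofReal (2 * π * lam * x * Real.exp (-(b * x ^ 2))) := by
        rw [← lintegral_indicator measurableSet_Ioi]
        refine lintegral_congr fun x => ?_
        by_cases hx : (0:ℝ) < x
        · rw [indicator_of_mem (show x ∈ Ioi (0:ℝ) from hx)]
          simp only [Pi.mul_apply]
          rw [slice x hx]
          simp only [hdens_def]
          rw [if_pos hx, ← ENNReal.ofReal_mul (by positivity)]
          congr 1
          have hexp : Real.exp (-(lam * π * x ^ 2)) * Real.exp (-(z * σ2 / Pa * x ^ 2))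
              = Real.exp (-(b * x ^ 2)) := by
            rw [← Real.exp_add]; congr 1; simp only [hb_def]; ring
          rw [mul_assoc, hexp]
        · rw [indicator_of_notMem (show x ∉ Ioi (0:ℝ) from hx)]
          simp only [Pi.mul_apply, hdens_def]
          rw [if_neg hx]
          simp
      rw [hmain, L2 hlam hb]
      congr 1
      have hb' : b ≠ 0 := ne_of_gt hb
      have hcz : (1:ℝ) + c * z ≠ 0 := by positivity
      simp only [hb_def, hc_def] at *
      field_simp
    rw [setLIntegral_congr_fun measurableSet_Ioi hmeas_t,
      ← ofReal_integral_eq_lintegral_ofReal (L5' hcpos hc) ?hnn, L5 hcpos hc,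
      ENNReal.toReal_ofReal ?hnn2]
    case hnn =>
      filter_upwards [ae_restrict_mem measurableSet_Ioi] with t ht
      have : (0:ℝ) < 1 + c * (Real.exp t - 1) := by
        nlinarith [Real.one_le_exp (le_of_lt (show (0:ℝ) < t from ht))]
      positivity
    case hnn2 =>
      rcases lt_or_gt_of_ne hc with h|h
      · exact div_nonneg_of_nonpos (Real.log_nonpos hcpos.le h.le) (by linarith)
      · exact div_nonneg (Real.log_nonneg h.le) (by linarith)
  simp only [Real.logb]
  rw [integral_div, key, div_div]
end

section
/- Let n ≥ 1 be a natural number and let λ, α, d, R_c, P_a, P_u, z > 0 be real numbers. Let X be Gamma-distributed with shape n and rate 1, Y exponentially distributed with rate 1, and r a real random variable with probability density f_r(r) = 2πλ r e^{−λπr²} for r > 0, all mutually independent. Then P( P_a·X·r^{−α} ≤ z·P_u·Y·d^{−α} and r ≤ R_c ) = 2πλ ∫₀^{R_c} r e^{−λπr²} · ( c(r)/(1 + c(r)) )^n dr, where c(r) = z·(P_u/P_a)·(r/d)^α. -/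
open MeasureTheory ProbabilityTheory Real
open Set
open scoped ENNReal

-- exp measure of Ici
lemma expIci (t : ℝ) (ht : 0 ≤ t) : expMeasure 1 (Ici t) = ENNReal.ofReal (Real.exp (-t)) := by
  have hP : IsProbabilityMeasure (expMeasure 1) := isProbabilityMeasure_expMeasure one_pos
  have hs : expMeasure 1 {t} = 0 :=
    (withDensity_absolutelyContinuous volume _) (measure_singleton t)
  have hIic : expMeasure 1 (Iic t) = ENNReal.ofReal (1 - Real.exp (-t)) := by
    rw [expMeasure, gammaMeasure, withDensity_apply _ measurableSet_Iic]
    have := lintegral_exponentialPDF_eq_antiDeriv one_pos t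
    rw [show (exponentialPDF 1) = gammaPDF 1 1 from rfl] at this
    rw [this, if_pos ht, one_mul]
  have hIio : expMeasure 1 (Iio t) = ENNReal.ofReal (1 - Real.exp (-t)) := by
    refine le_antisymm ?_ ?_
    · rw [← hIic]; exact measure_mono Iio_subset_Iic_self
    · rw [← hIic, ← Set.Iio_insert]
      calc expMeasure 1 (insert t (Iio t)) ≤ expMeasure 1 {t} + expMeasure 1 (Iio t) := by
            rw [Set.insert_eq]; exact measure_union_le _ _
        _ = expMeasure 1 (Iio t) := by rw [hs, zero_add]
  have : Ici t = (Iio t)ᶜ := by simp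
  rw [this, measure_compl measurableSet_Iio (measure_ne_top _ _), measure_univ, hIio,
    ← ENNReal.ofReal_one, ← ENNReal.ofReal_sub _ (sub_nonneg.mpr (Real.exp_le_one_iff.mpr (by linarith)))]
  norm_num

lemma gamma_ae_nonneg (n : ℕ) : ∀ᵐ x ∂(gammaMeasure n 1), 0 ≤ x := by
  rw [ae_iff]
  have : {x : ℝ | ¬ 0 ≤ x} = Iio 0 := by ext x; simp [not_le]
  rw [this, gammaMeasure, withDensity_apply _ measurableSet_Iio,
    lintegral_gammaPDF_of_nonpos le_rfl]

lemma innerCalc (n : ℕ) (hn : 1 ≤ n) (c : ℝ) (hc : 0 < c) :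
    ((gammaMeasure n 1).prod (expMeasure 1)) {p : ℝ × ℝ | p.1 ≤ c * p.2}
      = ENNReal.ofReal ((c / (1 + c)) ^ n) := by
  have hnpos : (0:ℝ) < n := by exact_mod_cast hn
  have hG : IsProbabilityMeasure (gammaMeasure (n:ℝ) 1) := isProbabilityMeasure_gammaMeasure hnpos one_pos
  have hE : IsProbabilityMeasure (expMeasure 1) := isProbabilityMeasure_expMeasure one_pos
  have hset : MeasurableSet {p : ℝ × ℝ | p.1 ≤ c * p.2} :=
    measurableSet_le measurable_fst (measurable_snd.const_mul c)
  rw [Measure.prod_apply hset]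
  have hslice : ∀ x : ℝ, (Prod.mk x ⁻¹' {p : ℝ × ℝ | p.1 ≤ c * p.2}) = Ici (x / c) := by
    intro x; ext y
    simp only [mem_preimage, mem_setOf_eq, mem_Ici, div_le_iff₀ hc]
    rw [mul_comm]
  simp_rw [hslice]
  set b : ℝ := 1 + 1/c with hb
  have hbpos : 0 < b := by positivity
  have h1 : ∫⁻ x, expMeasure 1 (Ici (x / c)) ∂(gammaMeasure n 1)
      = ∫⁻ x, ENNReal.ofReal (Real.exp (-(x / c))) ∂(gammaMeasure n 1) := by
    refine lintegral_congr_ae ?_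
    filter_upwards [gamma_ae_nonneg n] with x hx
    exact expIci _ (by positivity)
  rw [h1, gammaMeasure, lintegral_withDensity_eq_lintegral_mul _
    (show Measurable (gammaPDF n 1) from (measurable_gammaPDFReal n 1).ennreal_ofReal)
    (by fun_prop)]
  have h0 : ∀ᵐ (x:ℝ), x ≠ (0:ℝ) := by
    refine ae_iff.mpr ?_
    simpa [not_not, Set.setOf_eq_eq_singleton'] using measure_singleton (0:ℝ)
  have h2 : ∫⁻ x, (gammaPDF n 1 * fun x => ENNReal.ofReal (Real.exp (-(x / c)))) x
      = ∫⁻ x, ENNReal.ofReal ((Ioi (0:ℝ)).indicator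
          (fun x => (Real.Gamma n)⁻¹ * (x ^ ((n:ℝ)-1) * Real.exp (-(b * x)))) x) := by
    refine lintegral_congr_ae ?_
    filter_upwards [h0] with x hx0
    rcases lt_or_gt_of_ne hx0 with hx | hx
    · rw [Pi.mul_apply, gammaPDF_of_neg hx, zero_mul,
        indicator_of_notMem (by simp [not_lt.mpr hx.le] : x ∉ Ioi (0:ℝ)), ENNReal.ofReal_zero]
    · rw [Pi.mul_apply, gammaPDF_of_nonneg hx.le, indicator_of_mem (mem_Ioi.mpr hx),
        ← ENNReal.ofReal_mul (by positivity)]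
      congr 1
      rw [Real.one_rpow, mul_assoc, ← Real.exp_add,
        show -(1*x) + -(x/c) = -(b*x) by rw [hb]; ring, one_div]
      ring
  have hint : Integrable ((Ioi (0:ℝ)).indicator
      (fun x => (Real.Gamma n)⁻¹ * (x ^ ((n:ℝ)-1) * Real.exp (-(b * x))))) volume := by
    refine (IntegrableOn.integrable_indicator ?_ measurableSet_Ioi)
    have := (integrableOn_rpow_mul_exp_neg_mul_rpow
      (by linarith : (-1:ℝ) < (n:ℝ)-1) zero_lt_one hbpos).const_mul (Real.Gamma n)⁻¹
    simpa [Real.rpow_one, neg_mul, mul_assoc, IntegrableOn] using this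
  rw [h2, ← ofReal_integral_eq_lintegral_ofReal hint
    (ae_of_all _ (indicator_nonneg (fun x hx => by have hx3 : (0:ℝ) < x := hx; positivity)))]
  rw [integral_indicator measurableSet_Ioi, MeasureTheory.integral_const_mul,
    integral_rpow_mul_exp_neg_mul_Ioi hnpos hbpos]
  congr 1
  rw [show (1/b : ℝ) = c/(1+c) by rw [hb]; field_simp; ring,
    Real.rpow_natCast (c/(1+c)) n, mul_comm ((c/(1+c))^n), ← mul_assoc,
    inv_mul_cancel₀ (Real.Gamma_pos_of_pos hnpos).ne', one_mul]

/-- Eq. (34): cdf of the downlink SINR in the interference-limited case, restricted to the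
cell of radius `R_c`: with `X ~ Gamma(n, 1)`, `Y ~ Exp(1)` and `r` the nearest-PPP-point
distance, all independent,
`P(P_a X r^{−α} ≤ z P_u Y d^{−α} ∧ r ≤ R_c) = 2πλ ∫₀^{R_c} r e^{−λπr²} (c(r)/(1+c(r)))^n dr`
where `c(r) = z (P_u/P_a)(r/d)^α`. -/
theorem stmt_7 {Ω : Type*} [MeasurableSpace Ω] (μ : Measure Ω) [IsProbabilityMeasure μ]
    (n : ℕ) (hn : 1 ≤ n) (lam α d Rc Pa Pu z : ℝ)
    (hlam : 0 < lam) (hα : 0 < α) (hd : 0 < d) (hRc : 0 < Rc)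
    (hPa : 0 < Pa) (hPu : 0 < Pu) (hz : 0 < z)
    (X Y r : Ω → ℝ)
    (hindep : iIndepFun ![X, Y, r] μ)
    (hX : μ.map X = gammaMeasure n 1)
    (hY : μ.map Y = expMeasure 1)
    (hr : μ.map r = volume.withDensity (fun x =>
      ENNReal.ofReal (if 0 < x then 2 * π * lam * x * Real.exp (-(lam * π * x ^ 2)) else 0))) :
    μ {ω | Pa * X ω * (r ω ^ α)⁻¹ ≤ z * Pu * Y ω * (d ^ α)⁻¹ ∧ r ω ≤ Rc}
      = ENNReal.ofReal (2 * π * lam * ∫ s in (0 : ℝ)..Rc,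
          s * Real.exp (-(lam * π * s ^ 2)) *
            (z * (Pu / Pa) * (s / d) ^ α / (1 + z * (Pu / Pa) * (s / d) ^ α)) ^ n) := by

  have hnpos : (0:ℝ) < n := by exact_mod_cast hn
  have hGP : IsProbabilityMeasure (gammaMeasure (n:ℝ) 1) := isProbabilityMeasure_gammaMeasure hnpos one_pos
  have hEP : IsProbabilityMeasure (expMeasure 1) := isProbabilityMeasure_expMeasure one_pos
  -- density for r
  set f : ℝ → ℝ≥0∞ := fun x =>
      ENNReal.ofReal (if 0 < x then 2 * π * lam * x * Real.exp (-(lam * π * x ^ 2)) else 0)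
    with hf_def
  have hf_meas : Measurable f := by
    apply Measurable.ennreal_ofReal
    apply Measurable.ite measurableSet_Ioi _ measurable_const
    fun_prop
  -- AEMeasurability of X, Y, r
  have hXm : AEMeasurable X μ := by
    by_contra h
    rw [Measure.map_of_not_aemeasurable h] at hX
    have := congrArg (fun m : Measure ℝ => m Set.univ) hX
    simp [measure_univ] at this
  have hYm : AEMeasurable Y μ := by
    by_contra h
    rw [Measure.map_of_not_aemeasurable h] at hY
    have := congrArg (fun m : Measure ℝ => m Set.univ) hY
    simp [measure_univ] at this
  have hrm : AEMeasurable r μ := by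
    by_contra h
    rw [Measure.map_of_not_aemeasurable h] at hr
    have h2 := congrArg (fun m : Measure ℝ => m (Ioi 0)) hr
    simp only [Measure.coe_zero, Pi.zero_apply] at h2
    rw [withDensity_apply _ measurableSet_Ioi] at h2
    have h3 : f =ᵐ[volume.restrict (Ioi 0)] 0 := by
      rw [← lintegral_eq_zero_iff hf_meas]; exact h2.symm
    rw [Filter.EventuallyEq, ae_restrict_iff' measurableSet_Ioi] at h3
    have h4 : volume (Ioi (0:ℝ)) = 0 := by
      refine measure_mono_null ?_ (ae_iff.mp h3)
      intro x hx
      simp only [mem_setOf_eq, Classical.not_imp]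
      refine ⟨hx, ?_⟩
      have hx' : (0:ℝ) < x := hx
      simp only [hf_def, Pi.zero_apply, if_pos hx', ENNReal.ofReal_eq_zero, not_le]
      positivity
    simp [Real.volume_Ioi] at h4
  obtain ⟨X', hX'm, hXe⟩ := hXm
  obtain ⟨Y', hY'm, hYe⟩ := hYm
  obtain ⟨r', hr'm, hre⟩ := hrm
  have hmeas3 : ∀ i, Measurable (![X', Y', r'] i) := by
    intro i; fin_cases i <;> simpa
  have hindep' : iIndepFun ![X', Y', r'] μ := by
    rw [iIndepFun_iff_measure_inter_preimage_eq_mul] at hindep ⊢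
    intro S sets hmeassets
    have hv : ∀ᵐ ω ∂μ, ∀ i : Fin 3, ![X, Y, r] i ω = ![X', Y', r'] i ω := by
      filter_upwards [hXe, hYe, hre] with ω e1 e2 e3
      intro i; fin_cases i <;> simpa
    have h1 : μ (⋂ i ∈ S, ![X', Y', r'] i ⁻¹' sets i)
        = μ (⋂ i ∈ S, ![X, Y, r] i ⁻¹' sets i) := by
      refine measure_congr (Filter.eventuallyEq_set.mpr ?_)
      filter_upwards [hv] with ω h
      simp only [Set.mem_iInter, Set.mem_preimage]
      constructor <;> intro hmem i hi
      · rw [h i]; exact hmem i hi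
      · rw [← h i]; exact hmem i hi
    have h2 : ∀ i ∈ S, μ (![X', Y', r'] i ⁻¹' sets i) = μ (![X, Y, r] i ⁻¹' sets i) := by
      intro i _
      refine measure_congr (Filter.eventuallyEq_set.mpr ?_)
      filter_upwards [hv] with ω h
      simp only [Set.mem_preimage, h i]
    rw [h1, hindep S hmeassets]
    exact Finset.prod_congr rfl fun i hi => (h2 i hi).symm
  have hIXY : IndepFun X' Y' μ :=
    hindep'.indepFun (show (0 : Fin 3) ≠ 1 by decide)
  have hIpair : IndepFun (fun ω => (X' ω, Y' ω)) r' μ :=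
    hindep'.indepFun_prodMk hmeas3 0 1 2 (by decide) (by decide)
  have hmapX : μ.map X' = gammaMeasure n 1 := by
    rw [← Measure.map_congr hXe]; exact hX
  have hmapY : μ.map Y' = expMeasure 1 := by
    rw [← Measure.map_congr hYe]; exact hY
  have hmapr : μ.map r' = volume.withDensity f := by
    rw [← Measure.map_congr hre]; exact hr
  have hmapXY : μ.map (fun ω => (X' ω, Y' ω)) = (gammaMeasure n 1).prod (expMeasure 1) := by
    rw [← hmapX, ← hmapY]
    exact (indepFun_iff_map_prod_eq_prod_map_map hX'm.aemeasurable hY'm.aemeasurable).mp hIXY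
  have hmapT : μ.map (fun ω => (r' ω, (X' ω, Y' ω)))
      = (volume.withDensity f).prod ((gammaMeasure n 1).prod (expMeasure 1)) := by
    rw [← hmapr, ← hmapXY]
    exact (indepFun_iff_map_prod_eq_prod_map_map hr'm.aemeasurable
      (hX'm.prodMk hY'm).aemeasurable).mp hIpair.symm
  -- replace the event by its primed version
  have hset_eq : μ {ω | Pa * X ω * (r ω ^ α)⁻¹ ≤ z * Pu * Y ω * (d ^ α)⁻¹ ∧ r ω ≤ Rc}
      = μ {ω | Pa * X' ω * (r' ω ^ α)⁻¹ ≤ z * Pu * Y' ω * (d ^ α)⁻¹ ∧ r' ω ≤ Rc} := by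
    refine measure_congr (Filter.eventuallyEq_set.mpr ?_)
    filter_upwards [hXe, hYe, hre] with ω e1 e2 e3
    simp only [mem_setOf_eq, e1, e2, e3]
  rw [hset_eq]
  set E : Set (ℝ × ℝ × ℝ) :=
    {p | Pa * p.2.1 * (p.1 ^ α)⁻¹ ≤ z * Pu * p.2.2 * (d ^ α)⁻¹ ∧ p.1 ≤ Rc} with hE_def
  have hE : MeasurableSet E := by
    have hm1 : Measurable fun p : ℝ × ℝ × ℝ => Pa * p.2.1 * (p.1 ^ α)⁻¹ := by fun_prop
    have hm2 : Measurable fun p : ℝ × ℝ × ℝ => z * Pu * p.2.2 * (d ^ α)⁻¹ := by fun_prop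
    rw [hE_def, Set.setOf_and]
    exact (measurableSet_le hm1 hm2).inter (measurableSet_le measurable_fst measurable_const)
  have hT : Measurable (fun ω => (r' ω, (X' ω, Y' ω))) :=
    hr'm.prodMk (hX'm.prodMk hY'm)
  have hpre : {ω | Pa * X' ω * (r' ω ^ α)⁻¹ ≤ z * Pu * Y' ω * (d ^ α)⁻¹ ∧ r' ω ≤ Rc}
      = (fun ω => (r' ω, (X' ω, Y' ω))) ⁻¹' E := rfl
  rw [hpre, ← Measure.map_apply hT hE, hmapT, Measure.prod_apply hE]
  set c : ℝ → ℝ := fun s => z * (Pu / Pa) * (s / d) ^ α with hc_def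
  have hcnn : ∀ s : ℝ, 0 ≤ s → 0 ≤ c s := by
    intro s hs
    have h1 : (0:ℝ) ≤ (s/d)^α := rpow_nonneg (by positivity) α
    rw [hc_def]; positivity
  have hcpos : ∀ s : ℝ, 0 < s → 0 < c s := by
    intro s hs
    have h1 : (0:ℝ) < (s/d)^α := rpow_pos_of_pos (by positivity) α
    rw [hc_def]; positivity
  have hslice : ∀ s : ℝ, 0 < s → s ≤ Rc →
      (Prod.mk s ⁻¹' E) = {q : ℝ × ℝ | q.1 ≤ c s * q.2} := by
    intro s hs hsR
    ext q
    simp only [mem_preimage, hE_def, mem_setOf_eq, and_iff_left hsR]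
    have hsα : (0:ℝ) < s ^ α := rpow_pos_of_pos hs α
    have hdα : (0:ℝ) < d ^ α := rpow_pos_of_pos hd α
    rw [← div_eq_mul_inv, ← div_eq_mul_inv, div_le_div_iff₀ hsα hdα]
    have hcs : c s * q.2 = z * Pu * q.2 * s ^ α / (Pa * d ^ α) := by
      rw [hc_def]
      simp only
      rw [Real.div_rpow hs.le hd.le]
      field_simp
    rw [hcs, le_div_iff₀ (by positivity)]
    constructor <;> intro h <;> nlinarith [h]
  rw [lintegral_withDensity_eq_lintegral_mul _ hf_meas (measurable_measure_prodMk_left hE)]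
  set F : ℝ → ℝ := (Ioc (0:ℝ) Rc).indicator
    (fun s => 2 * π * lam * (s * Real.exp (-(lam * π * s ^ 2)) * (c s / (1 + c s)) ^ n))
    with hF_def
  have hpoint : ∀ s : ℝ,
      (f * fun s => ((gammaMeasure n 1).prod (expMeasure 1)) (Prod.mk s ⁻¹' E)) s
        = ENNReal.ofReal (F s) := by
    intro s
    rw [Pi.mul_apply]
    by_cases hs : 0 < s
    · by_cases hsR : s ≤ Rc
      · rw [hslice s hs hsR, innerCalc n hn (c s) (hcpos s hs), hf_def]
        simp only [if_pos hs]
        rw [← ENNReal.ofReal_mul (by positivity), hF_def,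
          indicator_of_mem (show s ∈ Ioc 0 Rc from ⟨hs, hsR⟩)]
        congr 1
        ring
      · have hempty : Prod.mk s ⁻¹' E = ∅ := by
          ext q; simp [hE_def, hsR]
        rw [hempty, measure_empty, mul_zero, hF_def,
          indicator_of_notMem (fun hmem => hsR hmem.2), ENNReal.ofReal_zero]
    · rw [hf_def]
      simp only [if_neg hs]
      rw [ENNReal.ofReal_zero, zero_mul, hF_def,
        indicator_of_notMem (fun hmem => hs hmem.1), ENNReal.ofReal_zero]
  rw [lintegral_congr hpoint]
  have hccont : Continuous c := by
    rw [hc_def]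
    exact continuous_const.mul ((continuous_id.div_const d).rpow_const (fun x => Or.inr hα.le))
  have hGcont : ContinuousOn
      (fun s => 2 * π * lam * (s * Real.exp (-(lam * π * s ^ 2)) * (c s / (1 + c s)) ^ n))
      (Icc 0 Rc) := by
    refine ContinuousOn.mul continuousOn_const (ContinuousOn.mul ?_ ?_)
    · exact (by fun_prop : Continuous fun s : ℝ => s * Real.exp (-(lam * π * s ^ 2))).continuousOn
    · refine ContinuousOn.pow ?_ n
      refine ContinuousOn.div hccont.continuousOn
        (continuous_const.add hccont).continuousOn ?_
      intro s hs
      have := hcnn s hs.1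
      intro hzero; linarith
  have hFint : Integrable F volume := by
    rw [hF_def]
    exact (hGcont.integrableOn_Icc.mono_set Ioc_subset_Icc_self).integrable_indicator
      measurableSet_Ioc
  have hFnn : 0 ≤ᵐ[volume] F := by
    refine ae_of_all _ (fun s => indicator_nonneg (fun t ht => ?_) s)
    have h1 := hcnn t ht.1.le
    have h2 : (0:ℝ) < t := ht.1
    positivity
  rw [← ofReal_integral_eq_lintegral_ofReal hFint hFnn, hF_def,
    MeasureTheory.integral_indicator measurableSet_Ioc,
    ← intervalIntegral.integral_of_le hRc.le, intervalIntegral.integral_const_mul]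
end

section
/- For all real β > 0 and all real r ≥ 0, d ≥ 0: ∫₀^{2π} dθ / ( β + (r² + d² − 2 r d cos θ)² ) = √2·π · ( (β + (r−d)⁴)^{−1/2} + (β + (r+d)⁴)^{−1/2} ) / √( β + (r² − d²)² + √( (β + (r−d)⁴)·(β + (r+d)⁴) ) ). -/
open Real Filter Topology intervalIntegral Set MeasureTheory

private lemma hasDerivAt_F (p w c4 : ℝ) (hp : 0 < p) (hw : 0 < w) (hc : 0 < c4) (t : ℝ) :
    HasDerivAt (fun t : ℝ =>
      (1-(p^2+w^2))/(2*p*c4*(p^2+w^2))/2 *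
        (Real.log ((t+p)^2+w^2) - Real.log ((t-p)^2+w^2)) +
      (1+(p^2+w^2))/(2*c4*(p^2+w^2))/w *
        (Real.arctan ((t+p)/w) + Real.arctan ((t-p)/w)))
      (2*(1+t^2)/(c4 * (((t+p)^2+w^2) * ((t-p)^2+w^2)))) t := by
  have hN : (0:ℝ) < (t+p)^2+w^2 := by positivity
  have hD : (0:ℝ) < (t-p)^2+w^2 := by positivity
  have h1 : HasDerivAt (fun t : ℝ => (t+p)^2+w^2) (2*(t+p)) t := by
    simpa using (((hasDerivAt_id t).add_const p).pow 2).add_const (w^2)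
  have h2 : HasDerivAt (fun t : ℝ => (t-p)^2+w^2) (2*(t-p)) t := by
    simpa using (((hasDerivAt_id t).sub_const p).pow 2).add_const (w^2)
  have hl1 := h1.log hN.ne'
  have hl2 := h2.log hD.ne'
  have ha1 : HasDerivAt (fun t : ℝ => Real.arctan ((t+p)/w))
      ((1/(1+((t+p)/w)^2)) * (1/w)) t := by
    have := (Real.hasDerivAt_arctan ((t+p)/w)).comp t
      (((hasDerivAt_id t).add_const p).div_const w)
    simpa [Function.comp_def] using this
  have ha2 : HasDerivAt (fun t : ℝ => Real.arctan ((t-p)/w))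
      ((1/(1+((t-p)/w)^2)) * (1/w)) t := by
    have := (Real.hasDerivAt_arctan ((t-p)/w)).comp t
      (((hasDerivAt_id t).sub_const p).div_const w)
    simpa [Function.comp_def] using this
  have := ((hl1.sub hl2).const_mul ((1-(p^2+w^2))/(2*p*c4*(p^2+w^2))/2)).add
    ((ha1.add ha2).const_mul ((1+(p^2+w^2))/(2*c4*(p^2+w^2))/w))
  refine this.congr_deriv ?_
  have hq : (0:ℝ) < p^2+w^2 := by positivity
  field_simp
  ring

private lemma logRatio_tendsto (p w : ℝ) (hw : 0 < w) :
    Tendsto (fun t : ℝ => Real.log ((t+p)^2+w^2) - Real.log ((t-p)^2+w^2)) atTop (𝓝 0) := by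
  have hN : ∀ t : ℝ, (0:ℝ) < (t+p)^2+w^2 := fun t => by positivity
  have hD : ∀ t : ℝ, (0:ℝ) < (t-p)^2+w^2 := fun t => by positivity
  have hq : Tendsto (fun t : ℝ => ((t+p)^2+w^2)/((t-p)^2+w^2)) atTop (𝓝 1) := by
    have h0 : Tendsto (fun t : ℝ => p/t) atTop (𝓝 0) :=
      tendsto_const_nhds.div_atTop tendsto_id
    have h0' : Tendsto (fun t : ℝ => w/t) atTop (𝓝 0) :=
      tendsto_const_nhds.div_atTop tendsto_id
    have hnum : Tendsto (fun t : ℝ => (1+p/t)^2+(w/t)^2) atTop (𝓝 1) := by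
      have : Tendsto (fun t : ℝ => (1+p/t)^2+(w/t)^2) atTop (𝓝 ((1+0)^2+0^2)) :=
        (((tendsto_const_nhds (x := (1:ℝ))).add h0).pow 2).add (h0'.pow 2)
      simpa using this
    have hden : Tendsto (fun t : ℝ => (1-p/t)^2+(w/t)^2) atTop (𝓝 1) := by
      have : Tendsto (fun t : ℝ => (1-p/t)^2+(w/t)^2) atTop (𝓝 ((1-0)^2+0^2)) :=
        (((tendsto_const_nhds (x := (1:ℝ))).sub h0).pow 2).add (h0'.pow 2)
      simpa using this
    have h := hnum.div hden one_ne_zero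
    rw [div_one] at h
    refine h.congr' ?_
    filter_upwards [eventually_ge_atTop (1:ℝ)] with t ht
    have ht0 : t ≠ 0 := by linarith
    have hd0 : (t-p)^2+w^2 ≠ 0 := (hD t).ne'
    rw [Pi.div_apply]
    field_simp
  have hlog : Tendsto (fun t : ℝ => Real.log (((t+p)^2+w^2)/((t-p)^2+w^2))) atTop (𝓝 0) := by
    have := (Real.continuousAt_log one_ne_zero).tendsto.comp hq
    simpa [Function.comp_def] using this
  refine hlog.congr (fun t => ?_)
  rw [Real.log_div (hN t).ne' (hD t).ne']

private lemma Gderiv (β a b p w c4 : ℝ) (hβ : 0 < β) (hp : 0 < p) (hw : 0 < w) (hc : 0 < c4)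
    (hfun : ∀ u : ℝ, β + (a - b * u) ^ 2
      = c4 * ((((1 - u) + (p ^ 2 + w ^ 2) * (1 + u)) ^ 2 - 4 * p ^ 2 * (1 - u ^ 2)) / 4))
    (θ : ℝ) (hθ0 : 0 ≤ θ) (hθπ : θ < π) :
    HasDerivAt (fun y : ℝ =>
      (1-(p^2+w^2))/(2*p*c4*(p^2+w^2))/2 *
        (Real.log ((Real.tan (y/2)+p)^2+w^2) - Real.log ((Real.tan (y/2)-p)^2+w^2)) +
      (1+(p^2+w^2))/(2*c4*(p^2+w^2))/w *
        (Real.arctan ((Real.tan (y/2)+p)/w) + Real.arctan ((Real.tan (y/2)-p)/w)))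
      ((β + (a - b * Real.cos θ) ^ 2)⁻¹) θ := by
  have hcos : 0 < Real.cos (θ/2) := by
    apply Real.cos_pos_of_mem_Ioo
    constructor <;> [linarith [Real.pi_pos]; linarith]
  set t := Real.tan (θ/2) with htdef
  have htan : HasDerivAt (fun y : ℝ => Real.tan (y/2)) (1/Real.cos (θ/2)^2 * (1/2)) θ :=
    HasDerivAt.comp (h₂ := Real.tan) θ (Real.hasDerivAt_tan hcos.ne') ((hasDerivAt_id θ).div_const 2)
  have hG := (hasDerivAt_F p w c4 hp hw hc t).comp θ htan
  refine hG.congr_deriv ?_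
  symm
  have hct : Real.cos θ = 2*Real.cos (θ/2)^2 - 1 := by
    have := Real.cos_two_mul (θ/2)
    rwa [show 2*(θ/2) = θ by ring] at this
  have h1t : (1+t^2) * Real.cos (θ/2)^2 = 1 := by
    rw [htdef, Real.tan_eq_sin_div_cos]
    field_simp
    linarith [Real.sin_sq_add_cos_sq (θ/2)]
  have h1t' : (0:ℝ) < 1 + t^2 := by positivity
  have hu : Real.cos θ = (1 - t^2)/(1+t^2) := by
    rw [eq_div_iff h1t'.ne']
    linear_combination hct * (1+t^2) + 2*h1t
  have hinvcos : 1/Real.cos (θ/2)^2 = 1 + t^2 := by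
    rw [div_eq_iff (pow_ne_zero 2 hcos.ne')]
    linarith [h1t]
  rw [hfun (Real.cos θ), hinvcos, hu]
  have hEpos : 0 < c4 * ((((1 - (1-t^2)/(1+t^2)) + (p^2+w^2)*(1 + (1-t^2)/(1+t^2)))^2
      - 4*p^2*(1-((1-t^2)/(1+t^2))^2))/4) := by
    rw [← hu, ← hfun]
    positivity
  have hN : (0:ℝ) < (t+p)^2+w^2 := by positivity
  have hD : (0:ℝ) < (t-p)^2+w^2 := by positivity
  rw [inv_eq_one_div, div_eq_iff hEpos.ne']
  field_simp
  ring

private lemma angular_helper (β a b p w c4 : ℝ) (hβ : 0 < β) (hp : 0 < p) (hw : 0 < w)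
    (hc : 0 < c4)
    (hfun : ∀ u : ℝ, β + (a - b * u) ^ 2
      = c4 * ((((1 - u) + (p ^ 2 + w ^ 2) * (1 + u)) ^ 2 - 4 * p ^ 2 * (1 - u ^ 2)) / 4)) :
    ∫ θ in (0:ℝ)..(2 * π), (β + (a - b * Real.cos θ) ^ 2)⁻¹
      = π * (1 + (p ^ 2 + w ^ 2)) / (c4 * (p ^ 2 + w ^ 2) * w) := by
  set f : ℝ → ℝ := fun θ => (β + (a - b * Real.cos θ) ^ 2)⁻¹ with hfdef
  have hpos : ∀ θ : ℝ, 0 < β + (a - b * Real.cos θ) ^ 2 := fun θ => by positivity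
  have hcont : Continuous f := by
    apply Continuous.inv₀
    · continuity
    · exact fun θ => (hpos θ).ne'
  have hper : Function.Periodic f (2 * π) := fun θ => by
    simp [hfdef, Real.cos_add_two_pi]
  have hsplit : ∫ θ in (0:ℝ)..(2 * π), f θ = 2 * ∫ θ in (0:ℝ)..π, f θ := by
    have h1 : ∫ θ in (0:ℝ)..(2 * π), f θ = ∫ θ in (-π)..π, f θ := by
      have := hper.intervalIntegral_add_eq 0 (-π)
      simpa [two_mul] using this
    have h2 : ∫ θ in (-π)..(0:ℝ), f θ = ∫ θ in (0:ℝ)..π, f θ := by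
      have h3 : ∫ θ in (0:ℝ)..π, f (-θ) = ∫ θ in (-π)..(0:ℝ), f θ := by
        simpa using intervalIntegral.integral_comp_neg (a := (0:ℝ)) (b := π) f
      rw [← h3]
      congr 1
      ext θ
      simp [hfdef, Real.cos_neg]
    rw [h1, ← intervalIntegral.integral_add_adjacent_intervals
      (hcont.intervalIntegrable (-π) 0) (hcont.intervalIntegrable 0 π), h2]
    ring
  have key : ∫ θ in (0:ℝ)..π, f θ = (1+(p^2+w^2))/(2*c4*(p^2+w^2))/w * π := by
    set G : ℝ → ℝ := fun y =>
        (1-(p^2+w^2))/(2*p*c4*(p^2+w^2))/2 *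
          (Real.log ((Real.tan (y/2)+p)^2+w^2) - Real.log ((Real.tan (y/2)-p)^2+w^2)) +
        (1+(p^2+w^2))/(2*c4*(p^2+w^2))/w *
          (Real.arctan ((Real.tan (y/2)+p)/w) + Real.arctan ((Real.tan (y/2)-p)/w)) with hGdef
    have hGd : ∀ θ : ℝ, 0 ≤ θ → θ < π → HasDerivAt G (f θ) θ := fun θ h1 h2 =>
      Gderiv β a b p w c4 hβ hp hw hc hfun θ h1 h2
    have hG0 : G 0 = 0 := by
      simp [hGdef, Real.tan_zero, Real.arctan_neg, neg_div]
    have hFTC : ∀ x ∈ Ico (0:ℝ) π, ∫ θ in (0:ℝ)..x, f θ = G x := by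
      intro x hx
      rw [intervalIntegral.integral_eq_sub_of_hasDerivAt (f := G)
        (fun θ hθ => by
          rw [uIcc_of_le hx.1] at hθ
          exact hGd θ hθ.1 (lt_of_le_of_lt hθ.2 hx.2))
        (hcont.intervalIntegrable 0 x), hG0, sub_zero]
    have h1 : Tendsto (fun x => ∫ θ in (0:ℝ)..x, f θ) (𝓝[<] π) (𝓝 (∫ θ in (0:ℝ)..π, f θ)) := by
      have hd := intervalIntegral.integral_hasDerivAt_right (hcont.intervalIntegrable 0 π)
        (hcont.stronglyMeasurableAtFilter volume (𝓝 π)) hcont.continuousAt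
      exact hd.continuousAt.continuousWithinAt
    have hhalf : Tendsto (fun x : ℝ => x/2) (𝓝[<] π) (𝓝[<] (π/2)) := by
      apply tendsto_nhdsWithin_of_tendsto_nhds_of_eventually_within
      · exact (tendsto_id.div_const 2).mono_left nhdsWithin_le_nhds
      · filter_upwards [self_mem_nhdsWithin] with x hx
        exact Set.mem_Iio.mpr (by have : x < π := hx; linarith)
    have htant : Tendsto (fun x : ℝ => Real.tan (x/2)) (𝓝[<] π) atTop :=
      Real.tendsto_tan_pi_div_two.comp hhalf
    have haP : Tendsto (fun t : ℝ => Real.arctan ((t+p)/w)) atTop (𝓝 (π/2)) := by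
      have h := (tendsto_atTop_add_const_right atTop p tendsto_id).atTop_div_const hw
      exact (Real.tendsto_arctan_atTop.mono_right nhdsWithin_le_nhds).comp h
    have haM : Tendsto (fun t : ℝ => Real.arctan ((t-p)/w)) atTop (𝓝 (π/2)) := by
      have h := (tendsto_atTop_add_const_right atTop (-p) tendsto_id).atTop_div_const hw
      have := (Real.tendsto_arctan_atTop.mono_right nhdsWithin_le_nhds).comp h
      simpa [sub_eq_add_neg, Function.comp_def] using this
    have hFlim : Tendsto (fun t : ℝ =>
        (1-(p^2+w^2))/(2*p*c4*(p^2+w^2))/2 *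
          (Real.log ((t+p)^2+w^2) - Real.log ((t-p)^2+w^2)) +
        (1+(p^2+w^2))/(2*c4*(p^2+w^2))/w *
          (Real.arctan ((t+p)/w) + Real.arctan ((t-p)/w))) atTop
        (𝓝 ((1+(p^2+w^2))/(2*c4*(p^2+w^2))/w * π)) := by
      have := ((logRatio_tendsto p w hw).const_mul ((1-(p^2+w^2))/(2*p*c4*(p^2+w^2))/2)).add
        ((haP.add haM).const_mul ((1+(p^2+w^2))/(2*c4*(p^2+w^2))/w))
      have e : (1-(p^2+w^2))/(2*p*c4*(p^2+w^2))/2 * 0 +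
          (1+(p^2+w^2))/(2*c4*(p^2+w^2))/w * (π/2+π/2)
          = (1+(p^2+w^2))/(2*c4*(p^2+w^2))/w * π := by ring
      rwa [e] at this
    have h2 : Tendsto G (𝓝[<] π) (𝓝 ((1+(p^2+w^2))/(2*c4*(p^2+w^2))/w * π)) :=
      hFlim.comp htant
    have heq : (fun x => ∫ θ in (0:ℝ)..x, f θ) =ᶠ[𝓝[<] π] G := by
      filter_upwards [Ioo_mem_nhdsLT_of_mem (Set.mem_Ioc.mpr ⟨Real.pi_pos, le_refl π⟩)]
        with x hx
      exact hFTC x ⟨hx.1.le, hx.2⟩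
    exact tendsto_nhds_unique (h1.congr' heq) h2
  rw [hsplit, key]
  have hq : (0:ℝ) < p^2+w^2 := by positivity
  field_simp

/-- Appendix B (Lemma 2) inner angular integral, path-loss exponent `α = 4`:
`∫₀^{2π} dθ/(β + (r² + d² − 2rd cos θ)²)
  = √2 π (c₀^{−1/2} + c₄^{−1/2}) / √(c₂ + √(c₄ c₀))`
with `c₀ = β + (r−d)⁴`, `c₂ = β + (r²−d²)²`, `c₄ = β + (r+d)⁴`. -/
theorem stmt_13 (β r d : ℝ) (hβ : 0 < β) (hr : 0 ≤ r) (hd : 0 ≤ d) :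
    ∫ θ in (0 : ℝ)..(2 * π), (β + (r ^ 2 + d ^ 2 - 2 * r * d * Real.cos θ) ^ 2)⁻¹
      = Real.sqrt 2 * π *
          ((Real.sqrt (β + (r - d) ^ 4))⁻¹ + (Real.sqrt (β + (r + d) ^ 4))⁻¹) /
        Real.sqrt (β + (r ^ 2 - d ^ 2) ^ 2 +
          Real.sqrt ((β + (r - d) ^ 4) * (β + (r + d) ^ 4))) := by
  rcases (mul_nonneg hr hd).lt_or_eq with hrd | hrd0
  · -- main case 0 < r*d
    have hc0 : 0 < β + (r-d)^4 := by positivity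
    have hc2 : 0 < β + (r^2-d^2)^2 := by positivity
    have hc4 : 0 < β + (r+d)^4 := by positivity
    set s := Real.sqrt ((β + (r-d)^4) * (β + (r+d)^4)) with hsdef
    have hs2 : s^2 = (β + (r-d)^4) * (β + (r+d)^4) := Real.sq_sqrt (by positivity)
    have hs0 : 0 < s := Real.sqrt_pos.mpr (by positivity)
    have hslt : β + (r^2-d^2)^2 < s := by
      nlinarith [mul_pos hβ (mul_pos hrd hrd), hs2, hs0, hc2]
    set p := Real.sqrt ((s - (β + (r^2-d^2)^2))/(2*(β + (r+d)^4))) with hpdef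
    set w := Real.sqrt ((s + (β + (r^2-d^2)^2))/(2*(β + (r+d)^4))) with hwdef
    have hp : 0 < p := Real.sqrt_pos.mpr (div_pos (by linarith) (by positivity))
    have hw : 0 < w := Real.sqrt_pos.mpr (div_pos (by linarith) (by positivity))
    have hp2 : p^2 = (s - (β + (r^2-d^2)^2))/(2*(β + (r+d)^4)) :=
      Real.sq_sqrt (le_of_lt (div_pos (by linarith) (by positivity)))
    have hw2 : w^2 = (s + (β + (r^2-d^2)^2))/(2*(β + (r+d)^4)) :=
      Real.sq_sqrt (le_of_lt (div_pos (by linarith) (by positivity)))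
    have hq : (β + (r+d)^4)*(p^2+w^2) = s := by
      rw [hp2, hw2]; field_simp; ring
    have hwp : (β + (r+d)^4)*(w^2-p^2) = β + (r^2-d^2)^2 := by
      rw [hp2, hw2]; field_simp; ring
    have hc0q : (β + (r+d)^4)*(p^2+w^2)^2 = β + (r-d)^4 := by
      apply mul_left_cancel₀ hc4.ne'
      linear_combination ((β + (r+d)^4)*(p^2+w^2) + s) * hq + hs2
    have hfun : ∀ u : ℝ, β + (r^2 + d^2 - 2*r*d * u) ^ 2
        = (β + (r+d)^4) * ((((1 - u) + (p ^ 2 + w ^ 2) * (1 + u)) ^ 2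
            - 4 * p ^ 2 * (1 - u ^ 2)) / 4) := fun u => by
      linear_combination (-(1-u^2)/2)*hwp + (-(1+u)^2/4)*hc0q
    rw [angular_helper β (r^2+d^2) (2*r*d) p w (β + (r+d)^4) hβ hp hw hc4 hfun]
    -- algebraic endgame
    set x := Real.sqrt (β + (r-d)^4) with hxdef
    set y := Real.sqrt (β + (r+d)^4) with hydef
    have hx : 0 < x := Real.sqrt_pos.mpr hc0
    have hy : 0 < y := Real.sqrt_pos.mpr hc4
    have hy2 : y^2 = β + (r+d)^4 := Real.sq_sqrt hc4.le
    have hxy : x*y = s := by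
      rw [hsdef, Real.sqrt_mul hc0.le, ← hxdef, ← hydef]
    have hsw : Real.sqrt (β + (r^2-d^2)^2 + s) = Real.sqrt 2 * y * w := by
      have hval : β + (r^2-d^2)^2 + s = (Real.sqrt 2 * y * w)^2 := by
        have e : (Real.sqrt 2 * y * w)^2 = 2 * (y^2 * w^2) := by
          rw [mul_pow, mul_pow, Real.sq_sqrt (by norm_num : (0:ℝ) ≤ 2)]; ring
        rw [e, hy2, hw2]
        field_simp
        ring
      rw [hval, Real.sqrt_sq (by positivity)]
    rw [hsw]
    have hpw : p^2 + w^2 = x/y := by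
      rw [eq_div_iff hy.ne']
      apply mul_left_cancel₀ hy.ne'
      calc y * ((p^2+w^2) * y) = y^2 * (p^2+w^2) := by ring
        _ = (β + (r+d)^4) * (p^2+w^2) := by rw [hy2]
        _ = s := hq
        _ = x*y := hxy.symm
        _ = y * x := by ring
    rw [show β + (r+d)^4 = y^2 from hy2.symm, hpw]
    have h2 : (0:ℝ) < Real.sqrt 2 := Real.sqrt_pos.mpr (by norm_num)
    field_simp
  · -- degenerate case r*d = 0
    have hrd : r * d = 0 := hrd0.symm
    have e1 : (r-d)^4 = (r^2+d^2)^2 := by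
      linear_combination (-4*r^2 + 4*r*d - 4*d^2) * hrd
    have e2 : (r+d)^4 = (r^2+d^2)^2 := by
      linear_combination (4*r^2 + 4*r*d + 4*d^2) * hrd
    have e3 : (r^2-d^2)^2 = (r^2+d^2)^2 := by
      linear_combination (-4*r*d) * hrd
    have hconst : ∀ θ : ℝ, (β + (r^2 + d^2 - 2*r*d * Real.cos θ)^2)⁻¹
        = (β + (r^2+d^2)^2)⁻¹ := fun θ => by
      have : 2*r*d*Real.cos θ = 0 := by rw [mul_assoc 2 r d, hrd]; ring
      rw [this, sub_zero]
    rw [intervalIntegral.integral_congr (g := fun _ => (β + (r^2+d^2)^2)⁻¹)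
      (fun θ _ => hconst θ), intervalIntegral.integral_const, e1, e2, e3]
    have hc : 0 < β + (r^2+d^2)^2 := by positivity
    rw [Real.sqrt_mul_self hc.le]
    have h2c : Real.sqrt (β + (r^2+d^2)^2 + (β + (r^2+d^2)^2))
        = Real.sqrt 2 * Real.sqrt (β + (r^2+d^2)^2) := by
      rw [show β + (r^2+d^2)^2 + (β + (r^2+d^2)^2) = 2 * (β + (r^2+d^2)^2) by ring,
        Real.sqrt_mul (by norm_num : (0:ℝ) ≤ 2)]
    rw [h2c]
    have hsc : 0 < Real.sqrt (β + (r^2+d^2)^2) := Real.sqrt_pos.mpr hc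
    have hsq : Real.sqrt (β + (r^2+d^2)^2) * Real.sqrt (β + (r^2+d^2)^2) = β + (r^2+d^2)^2 :=
      Real.mul_self_sqrt hc.le
    have h2 : (0:ℝ) < Real.sqrt 2 := Real.sqrt_pos.mpr (by norm_num)
    rw [smul_eq_mul, sub_zero]
    field_simp
    linear_combination 2 * hsq
end

section
/- Let λ, α, d, R_c, P_a, P_u, σ_n², σ_aa², z > 0 be real numbers. Let g and G be exponentially distributed with mean 1 and mean σ_aa² respectively, θ uniformly distributed on [0, 2π], and r a real random variable with probability density f_r(r) = 2πλ r e^{−λπr²} for r > 0, all mutually independent. Define s(r, θ) = r² + d² − 2rd cos θ and SINR_a = P_u·g·s(r,θ)^{−α/2} / (P_a·G + σ_n²). Then P( SINR_a > z and r ≤ R_c ) = λ ∫₀^{R_c} ∫₀^{2π} r e^{−λπr²} · e^{−(zσ_n²/P_u)·s(r,θ)^{α/2}} / (1 + z·(P_a/P_u)·σ_aa²·s(r,θ)^{α/2}) dθ dr. -/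
open MeasureTheory ProbabilityTheory Real
open scoped ENNReal NNReal

lemma expMeasure_def (a : ℝ) : expMeasure a = volume.withDensity (exponentialPDF a) := rfl

lemma expMeasure_Iio_zero (a : ℝ) : expMeasure a (Set.Iio 0) = 0 := by
  rw [expMeasure_def, withDensity_apply _ measurableSet_Iio]
  exact lintegral_exponentialPDF_of_nonpos le_rfl

lemma expMeasure_Ioi {a t : ℝ} (ha : 0 < a) (ht : 0 ≤ t) :
    expMeasure a (Set.Ioi t) = ENNReal.ofReal (Real.exp (-(a * t))) := by
  haveI := isProbabilityMeasure_expMeasure ha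
  have hIic : expMeasure a (Set.Iic t) = ENNReal.ofReal (1 - Real.exp (-(a * t))) := by
    rw [expMeasure_def, withDensity_apply _ measurableSet_Iic,
      lintegral_exponentialPDF_eq_antiDeriv ha, if_pos ht]
  have he : Real.exp (-(a * t)) ≤ 1 := by
    rw [Real.exp_le_one_iff]
    nlinarith
  have : Set.Ioi t = (Set.Iic t)ᶜ := by simp
  rw [this, measure_compl measurableSet_Iic (measure_ne_top _ _), hIic, measure_univ,
    ← ENNReal.ofReal_one, ← ENNReal.ofReal_sub _ (by linarith)]
  norm_num

lemma exp_lintegral_aux {a k : ℝ} (ha : 0 < a) (hk : 0 ≤ k) :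
    ∫⁻ y, exponentialPDF a y * ENNReal.ofReal (Real.exp (-(k * y))) = ENNReal.ofReal (a / (a + k)) := by
  have hak : 0 < a + k := by linarith
  have heq : ∀ y, exponentialPDF a y * ENNReal.ofReal (Real.exp (-(k * y)))
      = ENNReal.ofReal (a / (a + k)) * exponentialPDF (a + k) y := by
    intro y
    rw [exponentialPDF_eq, exponentialPDF_eq]
    split_ifs with h
    · rw [← ENNReal.ofReal_mul (by positivity), ← ENNReal.ofReal_mul (by positivity)]
      congr 1
      have hre : rexp (-(a * y)) * rexp (-(k * y)) = rexp (-((a + k) * y)) := by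
        rw [← Real.exp_add]; ring_nf
      rw [mul_assoc, hre]
      field_simp
    · simp
  simp_rw [heq]
  rw [lintegral_const_mul _ (by exact (measurable_exponentialPDFReal _).ennreal_ofReal),
    lintegral_exponentialPDF_eq_one hak, mul_one]


section helpers

variable {d α z Pa Pu σn2 σaa2 : ℝ}

lemma s_nonneg (d u t : ℝ) : 0 ≤ u ^ 2 + d ^ 2 - 2 * u * d * Real.cos t := by
  nlinarith [sq_nonneg (u - d * Real.cos t), sq_nonneg (d * Real.sin t),
    Real.sin_sq_add_cos_sq t, sq_nonneg (Real.sin t), sq_nonneg d]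

lemma s_pos {d u t : ℝ} (hd : 0 < d) (ht : Real.sin t ≠ 0) :
    0 < u ^ 2 + d ^ 2 - 2 * u * d * Real.cos t := by
  have h1 : 0 < (d * Real.sin t) ^ 2 := by positivity
  nlinarith [sq_nonneg (u - d * Real.cos t), Real.sin_sq_add_cos_sq t]

lemma cont_B (hα : 0 < α) :
    Continuous (fun p : ℝ × ℝ => (p.1 ^ 2 + d ^ 2 - 2 * p.1 * d * Real.cos p.2) ^ (α / 2)) := by
  apply Continuous.rpow_const (by fun_prop)
  exact fun _ => Or.inr (by positivity)

lemma cont_Fin (hα : 0 < α) (hz : 0 < z) (hPa : 0 < Pa) (hPu : 0 < Pu) (hσaa2 : 0 < σaa2) :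
    Continuous (fun p : ℝ × ℝ =>
      Real.exp (-(z * σn2 / Pu) * (p.1 ^ 2 + d ^ 2 - 2 * p.1 * d * Real.cos p.2) ^ (α / 2)) /
        (1 + z * (Pa / Pu) * σaa2 * (p.1 ^ 2 + d ^ 2 - 2 * p.1 * d * Real.cos p.2) ^ (α / 2))) := by
  have hB := cont_B (d := d) hα
  apply Continuous.div
  · exact Real.continuous_exp.comp (continuous_const.mul hB)
  · exact continuous_const.add (continuous_const.mul hB)
  · intro p
    have h0 : 0 ≤ (p.1 ^ 2 + d ^ 2 - 2 * p.1 * d * Real.cos p.2) ^ (α / 2) :=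
      Real.rpow_nonneg (s_nonneg d p.1 p.2) _
    have h1 : 0 ≤ z * (Pa / Pu) * σaa2 := by positivity
    have := mul_nonneg h1 h0
    exact (by linarith : (0:ℝ) < 1 + z * (Pa / Pu) * σaa2 *
      (p.1 ^ 2 + d ^ 2 - 2 * p.1 * d * Real.cos p.2) ^ (α / 2)).ne'

end helpers

set_option maxHeartbeats 2000000 in
theorem stmt_aux {Ω : Type*} [MeasurableSpace Ω] (μ : Measure Ω) [IsProbabilityMeasure μ]
    (lam α d Rc Pa Pu σn2 σaa2 z : ℝ)
    (hlam : 0 < lam) (hα : 0 < α) (hd : 0 < d) (hRc : 0 < Rc)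
    (hPa : 0 < Pa) (hPu : 0 < Pu) (hσn2 : 0 < σn2) (hσaa2 : 0 < σaa2) (hz : 0 < z)
    (g G θ r : Ω → ℝ)
    (hmg : Measurable g) (hmG : Measurable G) (hmθ : Measurable θ) (hmr : Measurable r)
    (hindep : iIndepFun ![g, G, θ, r] μ)
    (hg : μ.map g = expMeasure 1)
    (hG : μ.map G = expMeasure (1 / σaa2))
    (hθ : μ.map θ = (ENNReal.ofReal (2 * π))⁻¹ • volume.restrict (Set.Icc (0 : ℝ) (2 * π)))
    (hr : μ.map r = volume.withDensity (fun x =>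
      ENNReal.ofReal (if 0 < x then 2 * π * lam * x * Real.exp (-(lam * π * x ^ 2)) else 0))) :
    μ {ω | z < Pu * g ω *
            ((r ω ^ 2 + d ^ 2 - 2 * r ω * d * Real.cos (θ ω)) ^ (α / 2))⁻¹ /
              (Pa * G ω + σn2) ∧ r ω ≤ Rc}
      = ENNReal.ofReal (lam * ∫ s in (0 : ℝ)..Rc, ∫ φ in (0 : ℝ)..(2 * π),
          s * Real.exp (-(lam * π * s ^ 2)) *
            (Real.exp (-(z * σn2 / Pu) * (s ^ 2 + d ^ 2 - 2 * s * d * Real.cos φ) ^ (α / 2)) /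
              (1 + z * (Pa / Pu) * σaa2 *
                (s ^ 2 + d ^ 2 - 2 * s * d * Real.cos φ) ^ (α / 2)))) := by
  have h2π : (0:ℝ) < 2 * π := by positivity
  have ha : (0:ℝ) < 1 / σaa2 := by positivity
  haveI hP1 : IsProbabilityMeasure (expMeasure (1:ℝ)) := isProbabilityMeasure_expMeasure one_pos
  haveI hP2 : IsProbabilityMeasure (expMeasure (1/σaa2)) := isProbabilityMeasure_expMeasure ha
  set D : ℝ → ℝ≥0∞ := fun x =>
      ENNReal.ofReal (if 0 < x then 2 * π * lam * x * Real.exp (-(lam * π * x ^ 2)) else 0)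
    with hD
  have hDm : Measurable D := by
    apply Measurable.ennreal_ofReal
    exact Measurable.ite measurableSet_Ioi (by fun_prop) measurable_const
  set ν3 : Measure ℝ := (ENNReal.ofReal (2 * π))⁻¹ • volume.restrict (Set.Icc (0:ℝ) (2 * π))
    with hν3
  set ν4 : Measure ℝ := volume.withDensity D with hν4
  haveI : IsFiniteMeasure ν3 := by
    constructor
    rw [hν3]
    simp only [Measure.smul_apply, smul_eq_mul, Measure.restrict_apply_univ, Real.volume_Icc]
    exact ENNReal.mul_lt_top (by simp [Real.pi_pos]) ENNReal.ofReal_lt_top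
  haveI : SFinite ν4 := by rw [hν4]; infer_instance
  -- independence
  have hmeasvec : ∀ i, Measurable (![g, G, θ, r] i) := by
    intro i; fin_cases i <;> assumption
  have hi3 : IndepFun θ r μ := hindep.indepFun (show (2:Fin 4) ≠ 3 by decide)
  have hm34 : μ.map (fun ω => (θ ω, r ω)) = ν3.prod ν4 := by
    rw [(indepFun_iff_map_prod_eq_prod_map_map hmθ.aemeasurable hmr.aemeasurable).1 hi3,
      hθ, hr]
  have hi2 : IndepFun G (fun ω => (θ ω, r ω)) μ :=
    (hindep.indepFun_prodMk hmeasvec 2 3 1 (by decide) (by decide)).symm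
  have hm234 : μ.map (fun ω => (G ω, θ ω, r ω))
      = (expMeasure (1/σaa2)).prod (ν3.prod ν4) := by
    rw [(indepFun_iff_map_prod_eq_prod_map_map hmG.aemeasurable
      (hmθ.prodMk hmr).aemeasurable).1 hi2, hG, hm34]
  have hi1 : IndepFun g (fun ω => (G ω, θ ω, r ω)) μ := by
    have hfin := hindep.indepFun_finset {0} {1, 2, 3} (by decide) hmeasvec
    have hφ : Measurable (fun v : (∀ i : ({0} : Finset (Fin 4)), ℝ) => v ⟨0, by decide⟩) :=
      measurable_pi_apply _
    have hψ : Measurable (fun v : (∀ i : ({1, 2, 3} : Finset (Fin 4)), ℝ) =>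
        (v ⟨1, by decide⟩, v ⟨2, by decide⟩, v ⟨3, by decide⟩)) :=
      (measurable_pi_apply _).prodMk ((measurable_pi_apply _).prodMk (measurable_pi_apply _))
    exact hfin.comp hφ hψ
  have hm1234 : μ.map (fun ω => (g ω, G ω, θ ω, r ω))
      = (expMeasure 1).prod ((expMeasure (1/σaa2)).prod (ν3.prod ν4)) := by
    rw [(indepFun_iff_map_prod_eq_prod_map_map hmg.aemeasurable
      (hmG.prodMk (hmθ.prodMk hmr)).aemeasurable).1 hi1, hg, hm234]
  -- the event as a preimage
  have hBm : Measurable (fun p : ℝ × ℝ => (p.1 ^ 2 + d ^ 2 - 2 * p.1 * d * Real.cos p.2) ^ (α / 2)) :=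
    (cont_B hα).measurable
  set S : Set (ℝ × ℝ × ℝ × ℝ) := {p | z < Pu * p.1 *
      ((p.2.2.2 ^ 2 + d ^ 2 - 2 * p.2.2.2 * d * Real.cos p.2.2.1) ^ (α / 2))⁻¹ /
        (Pa * p.2.1 + σn2) ∧ p.2.2.2 ≤ Rc} with hSdef
  have hQm : Measurable (fun p : ℝ × ℝ × ℝ × ℝ => Pu * p.1 *
      ((p.2.2.2 ^ 2 + d ^ 2 - 2 * p.2.2.2 * d * Real.cos p.2.2.1) ^ (α / 2))⁻¹ /
        (Pa * p.2.1 + σn2)) := by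
    apply Measurable.div
    · exact (measurable_const.mul measurable_fst).mul
        ((hBm.comp (measurable_snd.snd.snd.prodMk measurable_snd.snd.fst)).inv)
    · fun_prop
  have hS : MeasurableSet S := by
    rw [hSdef, Set.setOf_and]
    exact (measurableSet_lt measurable_const hQm).inter
      (measurableSet_le measurable_snd.snd.snd measurable_const)
  have hE : {ω | z < Pu * g ω *
            ((r ω ^ 2 + d ^ 2 - 2 * r ω * d * Real.cos (θ ω)) ^ (α / 2))⁻¹ /
              (Pa * G ω + σn2) ∧ r ω ≤ Rc}
      = (fun ω => (g ω, G ω, θ ω, r ω)) ⁻¹' S := rfl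
  rw [hE, ← Measure.map_apply_of_aemeasurable
    (hmg.prodMk (hmG.prodMk (hmθ.prodMk hmr))).aemeasurable hS, hm1234,
    Measure.prod_apply_symm hS]
  set ν234 := (expMeasure (1/σaa2)).prod (ν3.prod ν4) with hν234
  set F : ℝ × ℝ × ℝ → ℝ≥0∞ := fun q => if q.2.2 ≤ Rc then
      ENNReal.ofReal (Real.exp (-(z / Pu * (Pa * q.1 + σn2) *
        ((q.2.2 ^ 2 + d ^ 2 - 2 * q.2.2 * d * Real.cos q.2.1) ^ (α / 2))))) else 0 with hF
  have hFm : Measurable F := by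
    apply Measurable.ite (measurableSet_le measurable_snd.snd measurable_const) _ measurable_const
    apply Measurable.ennreal_ofReal
    apply Real.measurable_exp.comp
    exact ((measurable_const.mul ((measurable_const.mul measurable_fst).add
      measurable_const)).mul (hBm.comp (measurable_snd.snd.prodMk measurable_snd.fst))).neg
  have hsin_null : ν3 {t : ℝ | Real.sin t = 0} = 0 := by
    have hms : MeasurableSet {t : ℝ | Real.sin t = 0} :=
      (isClosed_eq Real.continuous_sin continuous_const).measurableSet
    have hcount : ({t : ℝ | Real.sin t = 0}).Countable := by
      apply Set.Countable.mono ?_ (Set.countable_range (fun n : ℤ => (n : ℝ) * π))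
      intro x hx
      rcases Real.sin_eq_zero_iff.1 hx with ⟨n, hn⟩
      exact ⟨n, hn⟩
    rw [hν3]
    simp only [Measure.smul_apply, smul_eq_mul]
    rw [Measure.restrict_apply hms]
    refine mul_eq_zero.2 (Or.inr ?_)
    exact measure_mono_null Set.inter_subset_left (hcount.measure_zero _)
  have hnull : ν234 {q : ℝ × ℝ × ℝ | q.1 < 0 ∨ Real.sin q.2.1 = 0} = 0 := by
    have h1 : ν234 (Set.Iio 0 ×ˢ (Set.univ : Set (ℝ × ℝ))) = 0 := by
      rw [hν234, Measure.prod_prod, expMeasure_Iio_zero, zero_mul]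
    have h2 : ν234 ((Set.univ : Set ℝ) ×ˢ ({t : ℝ | Real.sin t = 0} ×ˢ (Set.univ : Set ℝ))) = 0 := by
      rw [hν234, Measure.prod_prod, Measure.prod_prod, hsin_null, zero_mul, mul_zero]
    refine measure_mono_null ?_ (measure_union_null h1 h2)
    rintro q (hq | hq)
    · exact Or.inl ⟨hq, Set.mem_univ _⟩
    · exact Or.inr ⟨Set.mem_univ _, hq, Set.mem_univ _⟩
  have hae : ∀ᵐ q ∂ν234, expMeasure 1 ((fun x => (x, q)) ⁻¹' S) = F q := by
    filter_upwards [(measure_eq_zero_iff_ae_notMem).1 hnull] with q hq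
    push_neg at hq
    obtain ⟨hq1, hq2⟩ := hq
    have hq1' : 0 ≤ q.1 := hq1
    have hs : 0 < q.2.2 ^ 2 + d ^ 2 - 2 * q.2.2 * d * Real.cos q.2.1 := s_pos hd hq2
    have hBpos : 0 < (q.2.2 ^ 2 + d ^ 2 - 2 * q.2.2 * d * Real.cos q.2.1) ^ (α / 2) :=
      Real.rpow_pos_of_pos hs _
    set B := (q.2.2 ^ 2 + d ^ 2 - 2 * q.2.2 * d * Real.cos q.2.1) ^ (α / 2) with hBdef
    have hden : 0 < Pa * q.1 + σn2 := by
      have : 0 ≤ Pa * q.1 := by positivity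
      linarith
    by_cases hu : q.2.2 ≤ Rc
    · have hset : ((fun x => (x, q)) ⁻¹' S) = Set.Ioi (z / Pu * (Pa * q.1 + σn2) * B) := by
        ext x
        simp only [hSdef, Set.mem_preimage, Set.mem_setOf_eq, Set.mem_Ioi, hu, and_true, ← hBdef]
        rw [show Pu * x * B⁻¹ / (Pa * q.1 + σn2) = (Pu * x) / (B * (Pa * q.1 + σn2)) by
          field_simp]
        rw [lt_div_iff₀ (by positivity)]
        rw [show z * (B * (Pa * q.1 + σn2)) = (z / Pu * (Pa * q.1 + σn2) * B) * Pu by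
          field_simp]
        rw [show Pu * x = x * Pu by ring]
        exact mul_lt_mul_iff_left₀ hPu
      rw [hset, expMeasure_Ioi one_pos (by positivity), hF]
      simp only [hu, if_true, one_mul, ← hBdef]
    · have hset : ((fun x => (x, q)) ⁻¹' S) = ∅ := by
        ext x; simp [hSdef, hu]
      rw [hset, hF]
      simp [hu]
  rw [lintegral_congr_ae hae]
  -- notation for the inner kernel
  obtain ⟨FIN, hFINdef⟩ : ∃ F : ℝ → ℝ → ℝ, F = fun u t =>
      Real.exp (-(z * σn2 / Pu) * (u ^ 2 + d ^ 2 - 2 * u * d * Real.cos t) ^ (α / 2)) /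
        (1 + z * (Pa / Pu) * σaa2 * (u ^ 2 + d ^ 2 - 2 * u * d * Real.cos t) ^ (α / 2)) :=
    ⟨_, rfl⟩
  have hFINcont : Continuous (fun p : ℝ × ℝ => FIN p.1 p.2) := by
    rw [hFINdef]; exact cont_Fin hα hz hPa hPu hσaa2
  have hFINnonneg : ∀ u t, 0 ≤ FIN u t := by
    intro u t
    have hB0 : 0 ≤ (u ^ 2 + d ^ 2 - 2 * u * d * Real.cos t) ^ (α / 2) :=
      Real.rpow_nonneg (s_nonneg d u t) _
    have h1 : 0 ≤ z * (Pa / Pu) * σaa2 * (u ^ 2 + d ^ 2 - 2 * u * d * Real.cos t) ^ (α / 2) :=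
      mul_nonneg (by positivity) hB0
    simp only [hFINdef]
    exact div_nonneg (Real.exp_nonneg _) (by linarith)
  obtain ⟨J, hJdef⟩ : ∃ J : ℝ → ℝ, J = fun u => ∫ t in (0:ℝ)..(2 * π), FIN u t := ⟨_, rfl⟩
  have hJcont : Continuous J := by
    rw [hJdef]
    exact intervalIntegral.continuous_parametric_intervalIntegral_of_continuous' (f := FIN) hFINcont 0 (2 * π)
  have hJ0 : ∀ u, 0 ≤ J u := fun u => by
    rw [hJdef]
    exact intervalIntegral.integral_nonneg h2π.le (fun t _ => hFINnonneg u t)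
  -- integrate out `G`
  rw [hν234, lintegral_prod_symm F hFm.aemeasurable]
  have hGint : ∀ w : ℝ × ℝ, (∫⁻ y, F (y, w) ∂(expMeasure (1/σaa2)))
      = if w.2 ≤ Rc then ENNReal.ofReal (FIN w.2 w.1) else 0 := by
    intro w
    by_cases hw : w.2 ≤ Rc
    · simp only [hF, hw, if_true]
      have hB0 : 0 ≤ (w.2 ^ 2 + d ^ 2 - 2 * w.2 * d * Real.cos w.1) ^ (α / 2) :=
        Real.rpow_nonneg (s_nonneg d w.2 w.1) _
      set B := (w.2 ^ 2 + d ^ 2 - 2 * w.2 * d * Real.cos w.1) ^ (α / 2) with hBdef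
      have hk0 : 0 ≤ z / Pu * Pa * B := by positivity
      have hsplit : ∀ y : ℝ, ENNReal.ofReal (Real.exp (-(z / Pu * (Pa * y + σn2) * B)))
          = ENNReal.ofReal (Real.exp (-(z * σn2 / Pu * B)))
            * ENNReal.ofReal (Real.exp (-(z / Pu * Pa * B * y))) := by
        intro y
        rw [← ENNReal.ofReal_mul (Real.exp_nonneg _), ← Real.exp_add]
        congr 2
        ring
      simp_rw [hsplit]
      rw [lintegral_const_mul _ (by fun_prop : Measurable fun y : ℝ =>
        ENNReal.ofReal (Real.exp (-(z / Pu * Pa * B * y))))]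
      rw [expMeasure_def, lintegral_withDensity_eq_lintegral_mul _
        (by exact (measurable_exponentialPDFReal _).ennreal_ofReal) (by fun_prop)]
      have hkey : (∫⁻ y, (exponentialPDF (1/σaa2) *
          fun y => ENNReal.ofReal (Real.exp (-(z / Pu * Pa * B * y)))) y)
          = ENNReal.ofReal ((1/σaa2) / (1/σaa2 + z / Pu * Pa * B)) := exp_lintegral_aux ha hk0
      rw [hkey, ← ENNReal.ofReal_mul (Real.exp_nonneg _)]
      congr 1
      simp only [hFINdef]
      simp only [← hBdef]
      have hd1 : (0:ℝ) < 1/σaa2 + z / Pu * Pa * B := by positivity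
      have hd2 : (0:ℝ) < 1 + z * (Pa / Pu) * σaa2 * B :=
        by nlinarith [mul_nonneg (by positivity : (0:ℝ) ≤ z * (Pa / Pu) * σaa2) hB0]
      rw [show -(z * σn2 / Pu * B) = -(z * σn2 / Pu) * B by ring]
      field_simp
    · simp only [hF, hw, if_false]
      simp
  rw [lintegral_congr hGint]
  -- integrate out `θ`
  have hwm : Measurable (fun w : ℝ × ℝ => if w.2 ≤ Rc then ENNReal.ofReal (FIN w.2 w.1) else 0) := by
    apply Measurable.ite (measurableSet_le measurable_snd measurable_const) _ measurable_const
    exact ((hFINcont.comp (continuous_snd.prodMk continuous_fst)).measurable).ennreal_ofReal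
  rw [lintegral_prod_symm _ hwm.aemeasurable]
  have hθint : ∀ u : ℝ, (∫⁻ t, (if u ≤ Rc then ENNReal.ofReal (FIN u t) else 0) ∂ν3)
      = if u ≤ Rc then (ENNReal.ofReal (2 * π))⁻¹ * ENNReal.ofReal (J u) else 0 := by
    intro u
    by_cases hu : u ≤ Rc
    · simp only [hu, if_true]
      rw [hν3, lintegral_smul_measure]
      congr 1
      have hcontu : Continuous (fun t => FIN u t) :=
        hFINcont.comp ((continuous_const (y := u)).prodMk continuous_id)
      rw [← ofReal_integral_eq_lintegral_ofReal hcontu.integrableOn_Icc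
        (Filter.Eventually.of_forall (fun t => hFINnonneg u t))]
      congr 1
      simp only [hJdef]
      rw [intervalIntegral.integral_of_le h2π.le, integral_Icc_eq_integral_Ioc]
    · simp [hu]
  rw [lintegral_congr hθint]
  -- integrate out `r`
  have hitem : Measurable (fun u : ℝ =>
      if u ≤ Rc then (ENNReal.ofReal (2 * π))⁻¹ * ENNReal.ofReal (J u) else 0) := by
    apply Measurable.ite (measurableSet_le measurable_id measurable_const) _ measurable_const
    exact measurable_const.mul (hJcont.measurable.ennreal_ofReal)
  rw [hν4, lintegral_withDensity_eq_lintegral_mul _ hDm hitem]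
  have hptw : ∀ u : ℝ, (D * fun u => if u ≤ Rc then
        (ENNReal.ofReal (2 * π))⁻¹ * ENNReal.ofReal (J u) else 0) u
      = Set.indicator (Set.Ioc 0 Rc)
          (fun v => ENNReal.ofReal (lam * (v * Real.exp (-(lam * π * v ^ 2)) * J v))) u := by
    intro u
    simp only [Pi.mul_apply]
    by_cases h1 : 0 < u
    · by_cases h2 : u ≤ Rc
      · rw [Set.indicator_of_mem (Set.mem_Ioc.mpr ⟨h1, h2⟩), hD]
        simp only [if_pos h1, if_pos h2]
        rw [show 2 * π * lam * u * Real.exp (-(lam * π * u ^ 2))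
            = (2 * π) * (lam * (u * Real.exp (-(lam * π * u ^ 2)))) by ring]
        rw [ENNReal.ofReal_mul h2π.le]
        rw [mul_comm (ENNReal.ofReal (2 * π)) _, mul_assoc, ← mul_assoc (ENNReal.ofReal (2 * π)),
          ENNReal.mul_inv_cancel (by simp [h2π, Real.pi_pos]) ENNReal.ofReal_ne_top, one_mul,
          ← ENNReal.ofReal_mul (by positivity)]
        congr 1
        ring
      · rw [Set.indicator_of_notMem (fun hmem => h2 hmem.2), if_neg h2, mul_zero]
    · rw [Set.indicator_of_notMem (fun hmem => h1 hmem.1), hD]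
      simp only [if_neg h1]
      simp
  rw [lintegral_congr hptw, lintegral_indicator measurableSet_Ioc]
  have hInt : IntegrableOn (fun u => lam * (u * Real.exp (-(lam * π * u ^ 2)) * J u))
      (Set.Ioc 0 Rc) volume := by
    apply Continuous.integrableOn_Ioc
    fun_prop
  rw [← ofReal_integral_eq_lintegral_ofReal hInt
    ((ae_restrict_iff' measurableSet_Ioc).2 (Filter.Eventually.of_forall (fun u hu => by
      have := hJ0 u
      have hu0 : 0 < u := hu.1
      positivity)))]
  congr 1
  rw [show (∫ u in Set.Ioc 0 Rc, lam * (u * Real.exp (-(lam * π * u ^ 2)) * J u))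
      = ∫ u in (0:ℝ)..Rc, lam * (u * Real.exp (-(lam * π * u ^ 2)) * J u) from
    (intervalIntegral.integral_of_le hRc.le).symm]
  rw [intervalIntegral.integral_const_mul]
  congr 1
  apply intervalIntegral.integral_congr
  intro u _
  simp only [hJdef]
  rw [← intervalIntegral.integral_const_mul]
  apply intervalIntegral.integral_congr
  intro t _
  simp only [hFINdef]

section indepcongr

variable {Ω : Type*} [MeasurableSpace Ω] {μ : Measure Ω}

lemma iIndepFun_ae_congr {ι : Type*} [Countable ι] {f f' : ι → Ω → ℝ}
    (hff' : ∀ i, f i =ᵐ[μ] f' i)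
    (h : iIndepFun f μ) :
    iIndepFun f' μ := by
  rw [iIndepFun_iff_measure_inter_preimage_eq_mul] at h ⊢
  intro S sets hsets
  have hall : ∀ᵐ ω ∂μ, ∀ i ∈ S, f i ω = f' i ω :=
    (ae_ball_iff S.countable_toSet).2 fun i _ => hff' i
  have h1 : μ (⋂ i ∈ S, f' i ⁻¹' sets i) = μ (⋂ i ∈ S, f i ⁻¹' sets i) := by
    apply measure_congr
    rw [Filter.eventuallyEq_set]
    filter_upwards [hall] with ω hω
    simp only [Set.mem_iInter, Set.mem_preimage]
    exact ⟨fun H i hi => (hω i hi) ▸ H i hi, fun H i hi => (hω i hi).symm ▸ H i hi⟩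
  have h2 : ∀ i ∈ S, μ (f' i ⁻¹' sets i) = μ (f i ⁻¹' sets i) := by
    intro i hi
    apply measure_congr
    rw [Filter.eventuallyEq_set]
    filter_upwards [hff' i] with ω hω
    simp [Set.mem_preimage, hω]
  rw [h1, h S hsets]
  exact (Finset.prod_congr rfl h2).symm

end indepcongr


set_option maxHeartbeats 1000000 in
/-- Eqs. (9)–(10) (MRC/MRT scheme, `n_u = 1`): cdf of the uplink SINR. With `g ~ Exp(1)`
(uplink fading), `G ~ Exp(1/σ_aa²)` (loopback interference, mean `σ_aa²`), `θ` uniform on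
`[0, 2π]` and `r` the nearest-PPP-point distance, all independent, and
`s(r,θ) = r² + d² − 2rd cos θ`,
`P(P_u g s^{−α/2}/(P_a G + σ_n²) > z ∧ r ≤ R_c)
  = λ ∫₀^{R_c} ∫₀^{2π} r e^{−λπr²} e^{−(zσ_n²/P_u) s^{α/2}} / (1 + z(P_a/P_u)σ_aa² s^{α/2}) dθ dr`. -/
theorem stmt_18 {Ω : Type*} [MeasurableSpace Ω] (μ : Measure Ω) [IsProbabilityMeasure μ]
    (lam α d Rc Pa Pu σn2 σaa2 z : ℝ)
    (hlam : 0 < lam) (hα : 0 < α) (hd : 0 < d) (hRc : 0 < Rc)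
    (hPa : 0 < Pa) (hPu : 0 < Pu) (hσn2 : 0 < σn2) (hσaa2 : 0 < σaa2) (hz : 0 < z)
    (g G θ r : Ω → ℝ)
    (hindep : iIndepFun ![g, G, θ, r] μ)
    (hg : μ.map g = expMeasure 1)
    (hG : μ.map G = expMeasure (1 / σaa2))
    (hθ : μ.map θ = (ENNReal.ofReal (2 * π))⁻¹ • volume.restrict (Set.Icc (0 : ℝ) (2 * π)))
    (hr : μ.map r = volume.withDensity (fun x =>
      ENNReal.ofReal (if 0 < x then 2 * π * lam * x * Real.exp (-(lam * π * x ^ 2)) else 0))) :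
    μ {ω | z < Pu * g ω *
            ((r ω ^ 2 + d ^ 2 - 2 * r ω * d * Real.cos (θ ω)) ^ (α / 2))⁻¹ /
              (Pa * G ω + σn2) ∧ r ω ≤ Rc}
      = ENNReal.ofReal (lam * ∫ s in (0 : ℝ)..Rc, ∫ φ in (0 : ℝ)..(2 * π),
          s * Real.exp (-(lam * π * s ^ 2)) *
            (Real.exp (-(z * σn2 / Pu) * (s ^ 2 + d ^ 2 - 2 * s * d * Real.cos φ) ^ (α / 2)) /
              (1 + z * (Pa / Pu) * σaa2 *
                (s ^ 2 + d ^ 2 - 2 * s * d * Real.cos φ) ^ (α / 2)))) := by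
  -- obtain a.e.-measurability from the identified laws
  have hg_ae : AEMeasurable g μ := by
    by_contra h
    rw [Measure.map_of_not_aemeasurable h] at hg
    haveI := isProbabilityMeasure_expMeasure (zero_lt_one (α := ℝ))
    have h0 : (expMeasure (1:ℝ)) Set.univ = 0 := by rw [← hg]; simp
    rw [measure_univ] at h0
    exact one_ne_zero h0
  have hG_ae : AEMeasurable G μ := by
    by_contra h
    rw [Measure.map_of_not_aemeasurable h] at hG
    haveI := isProbabilityMeasure_expMeasure (by positivity : (0:ℝ) < 1 / σaa2)
    have h0 : (expMeasure (1/σaa2)) Set.univ = 0 := by rw [← hG]; simp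
    rw [measure_univ] at h0
    exact one_ne_zero h0
  have hπ : (0:ℝ) < 2 * π := by positivity
  have hθ_ae : AEMeasurable θ μ := by
    by_contra h
    rw [Measure.map_of_not_aemeasurable h] at hθ
    have h0 : ((ENNReal.ofReal (2 * π))⁻¹ • volume.restrict (Set.Icc (0:ℝ) (2*π))) Set.univ = 0 := by
      rw [← hθ]; simp
    simp only [Measure.smul_apply, smul_eq_mul, Measure.restrict_apply_univ,
      Real.volume_Icc] at h0
    exact (mul_ne_zero (ENNReal.inv_ne_zero.2 ENNReal.ofReal_ne_top)
      (by simp only [ne_eq, ENNReal.ofReal_eq_zero, not_le]; linarith)) h0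
  have hr_ae : AEMeasurable r μ := by
    by_contra h
    rw [Measure.map_of_not_aemeasurable h] at hr
    have h0 : (volume.withDensity (fun x =>
        ENNReal.ofReal (if 0 < x then 2 * π * lam * x * Real.exp (-(lam * π * x ^ 2)) else 0)))
        (Set.Ioi 0) = 0 := by rw [← hr]; simp
    rw [withDensity_apply _ measurableSet_Ioi] at h0
    have hc : (0:ℝ≥0∞) < ENNReal.ofReal (2 * π * lam * 1 * Real.exp (-(lam * π * 2 ^ 2))) :=
      ENNReal.ofReal_pos.2 (by positivity)
    have hle : ENNReal.ofReal (2 * π * lam * 1 * Real.exp (-(lam * π * 2 ^ 2))) * volume (Set.Icc (1:ℝ) 2)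
        ≤ ∫⁻ x in Set.Ioi 0, ENNReal.ofReal
          (if 0 < x then 2 * π * lam * x * Real.exp (-(lam * π * x ^ 2)) else 0) ∂volume := by
      rw [← setLIntegral_const]
      have hDm : Measurable (fun x : ℝ =>
          ENNReal.ofReal (if 0 < x then 2 * π * lam * x * Real.exp (-(lam * π * x ^ 2)) else 0)) := by
        apply Measurable.ennreal_ofReal
        exact Measurable.ite measurableSet_Ioi (by fun_prop) measurable_const
      refine le_trans (setLIntegral_mono hDm ?_)
        (lintegral_mono_set (fun x hx => lt_of_lt_of_le one_pos hx.1))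
      intro x hx
      rw [if_pos (lt_of_lt_of_le one_pos hx.1)]
      apply ENNReal.ofReal_le_ofReal
      have hx1 : (1:ℝ) ≤ x := hx.1
      have hx2 : x ≤ 2 := hx.2
      have h4 : x ^ 2 ≤ 2 ^ 2 := by nlinarith
      have he : Real.exp (-(lam * π * 2 ^ 2)) ≤ Real.exp (-(lam * π * x ^ 2)) := by
        apply Real.exp_le_exp.2
        have := mul_le_mul_of_nonneg_left h4 (by positivity : (0:ℝ) ≤ lam * π)
        linarith
      have hmono : 2 * π * lam * 1 * Real.exp (-(lam * π * 2 ^ 2))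
          ≤ 2 * π * lam * x * Real.exp (-(lam * π * 2 ^ 2)) :=
        mul_le_mul_of_nonneg_right
          (mul_le_mul_of_nonneg_left hx1 (by positivity : (0:ℝ) ≤ 2 * π * lam))
          (Real.exp_pos _).le
      exact hmono.trans (mul_le_mul_of_nonneg_left he (by positivity))
    rw [h0, le_zero_iff] at hle
    rw [Real.volume_Icc, show (2:ℝ) - 1 = 1 by norm_num, ENNReal.ofReal_one, mul_one] at hle
    exact hc.ne' hle
  -- replace by measurable representatives
  set g' := hg_ae.mk g with hg'def
  set G' := hG_ae.mk G with hG'def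
  set θ' := hθ_ae.mk θ with hθ'def
  set r' := hr_ae.mk r with hr'def
  have heg : g =ᵐ[μ] g' := hg_ae.ae_eq_mk
  have heG : G =ᵐ[μ] G' := hG_ae.ae_eq_mk
  have heθ : θ =ᵐ[μ] θ' := hθ_ae.ae_eq_mk
  have her : r =ᵐ[μ] r' := hr_ae.ae_eq_mk
  have hindep' : iIndepFun ![g', G', θ', r'] μ := by
    refine iIndepFun_ae_congr (fun i => ?_) hindep
    fin_cases i
    · exact heg
    · exact heG
    · exact heθ
    · exact her
  have hset : μ {ω | z < Pu * g ω *
            ((r ω ^ 2 + d ^ 2 - 2 * r ω * d * Real.cos (θ ω)) ^ (α / 2))⁻¹ /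
              (Pa * G ω + σn2) ∧ r ω ≤ Rc}
      = μ {ω | z < Pu * g' ω *
            ((r' ω ^ 2 + d ^ 2 - 2 * r' ω * d * Real.cos (θ' ω)) ^ (α / 2))⁻¹ /
              (Pa * G' ω + σn2) ∧ r' ω ≤ Rc} := by
    apply measure_congr
    rw [Filter.eventuallyEq_set]
    filter_upwards [heg, heG, heθ, her] with ω h1 h2 h3 h4
    simp only [Set.mem_setOf_eq, h1, h2, h3, h4]
  rw [hset]
  exact stmt_aux μ lam α d Rc Pa Pu σn2 σaa2 z hlam hα hd hRc hPa hPu hσn2 hσaa2 hz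
    g' G' θ' r' hg_ae.measurable_mk hG_ae.measurable_mk hθ_ae.measurable_mk hr_ae.measurable_mk
    hindep'
    (by rw [← Measure.map_congr heg]; exact hg)
    (by rw [← Measure.map_congr heG]; exact hG)
    (by rw [← Measure.map_congr heθ]; exact hθ)
    (by rw [← Measure.map_congr her]; exact hr)
end
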